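/- arXiv:1710.02289 — 6 statements merged into one kernel-verified Lean document; each statement's English description precedes it below -/
import Mathlib

section
/- Let Ω ⊂ ℝⁿ be an open bounded set with the Lebesgue measure, let (X,d) be a locally compact Hadamard space, and let p ∈ [1,∞). Then the uniformly continuous maps Ω → X are dense in L^p(Ω,X): for every Lebesgue-measurable f : Ω → X with ∫_Ω d(f(ω),a)^p dω < ∞ for some a ∈ X, and every ε > 0, there exists a uniformly continuous map h : Ω → X such that ∫_Ω d(f(ω),h(ω))^p dω < ε. -/
/-!
A complete, locally compact geodesic space is proper (the Hopf–Rinow argument), hence separable,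
so the usual simple-function approximation gives a simple `g` with `∫ d(f, g)^p` small. The fibres
of `g` are then approximated from inside by disjoint compact sets `K_v`; on the `δ`-neighbourhood
of `K_v` we travel along the geodesic from a base point `a` to `v` at the rate given by the
`δ`-thickened indicator of `K_v`, and we stay at `a` elsewhere. This map is Lipschitz, stays as
close to `a` as `g` does, and differs from `g` only off `⋃ K_v`, a set of small measure.
-/

open MeasureTheory Set Function Metric Filter Topology NNReal ENNReal

section Geodesic

variable {X : Type*} [MetricSpace X]

def IsGeodesic (γ : ℝ → X) (x y : X) : Prop :=
  γ 0 = x ∧ γ 1 = y ∧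
    ∀ s ∈ Icc (0 : ℝ) 1, ∀ t ∈ Icc (0 : ℝ) 1, dist (γ s) (γ t) = |s - t| * dist x y

variable {γ : ℝ → X} {x y : X} {t : ℝ}

lemma IsGeodesic.dist_left (hγ : IsGeodesic γ x y) (ht : t ∈ Icc (0 : ℝ) 1) :
    dist x (γ t) = t * dist x y := by
  have h := hγ.2.2 0 (left_mem_Icc.2 zero_le_one) t ht
  rwa [hγ.1, zero_sub, abs_neg, abs_of_nonneg ht.1] at h

lemma IsGeodesic.dist_right (hγ : IsGeodesic γ x y) (ht : t ∈ Icc (0 : ℝ) 1) :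
    dist (γ t) y = (1 - t) * dist x y := by
  have h := hγ.2.2 t ht 1 (right_mem_Icc.2 zero_le_one)
  rwa [hγ.2.1, abs_of_nonpos (sub_nonpos.2 ht.2), neg_sub] at h

lemma IsGeodesic.dist_le (hγ : IsGeodesic γ x y) (ht : t ∈ Icc (0 : ℝ) 1) :
    dist x (γ t) ≤ dist x y := by
  rw [hγ.dist_left ht]
  exact mul_le_of_le_one_left dist_nonneg ht.2

lemma IsGeodesic.lipschitzOnWith (hγ : IsGeodesic γ x y) :
    LipschitzOnWith (nndist x y) γ (Icc 0 1) :=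
  LipschitzOnWith.of_dist_le_mul fun s hs t ht => by
    rw [hγ.2.2 s hs t ht, Real.dist_eq, coe_nndist, mul_comm]

variable (hgeo : ∀ x y : X, ∃ γ : ℝ → X, IsGeodesic γ x y)
include hgeo

lemma exists_dist_le_dist_le_of_dist_le_add {r s : ℝ} (hr : 0 ≤ r) (hs : 0 ≤ s)
    (h : dist x y ≤ r + s) : ∃ z, dist x z ≤ r ∧ dist z y ≤ s := by
  rcases le_or_gt (dist x y) r with hxy | hxy
  · exact ⟨y, hxy, by simpa using hs⟩
  obtain ⟨γ, hγ⟩ := hgeo x y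
  have hpos : 0 < dist x y := hr.trans_lt hxy
  have ht : r / dist x y ∈ Icc (0 : ℝ) 1 :=
    ⟨div_nonneg hr hpos.le, (div_le_one hpos).2 hxy.le⟩
  refine ⟨γ (r / dist x y), ?_, ?_⟩
  · rw [hγ.dist_left ht, div_mul_cancel₀ _ hpos.ne']
  · rw [hγ.dist_right ht, sub_mul, one_mul, div_mul_cancel₀ _ hpos.ne']
    linarith

lemma closedBall_add_subset_cthickening {r s : ℝ} (hr : 0 ≤ r) (hs : 0 ≤ s) :
    closedBall x (r + s) ⊆ cthickening s (closedBall x r) := fun y hy => by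
  obtain ⟨z, hxz, hzy⟩ :=
    exists_dist_le_dist_le_of_dist_le_add hgeo hr hs (mem_closedBall'.1 hy)
  exact mem_cthickening_of_dist_le y z s _ (mem_closedBall'.2 hxz) (dist_comm z y ▸ hzy)

lemma totallyBounded_closedBall_of_forall_lt {R : ℝ} (hR : 0 < R)
    (h : ∀ r < R, IsCompact (closedBall x r)) : TotallyBounded (closedBall x R) := by
  refine Metric.totallyBounded_iff.2 fun ε hε => ?_
  set s := min (ε / 2) R
  have hs : 0 < s := lt_min (half_pos hε) hR
  obtain ⟨t, ht, hcover⟩ := Metric.totallyBounded_iff.1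
    (h (R - s) (sub_lt_self R hs)).totallyBounded (ε / 2) (half_pos hε)
  refine ⟨t, ht, fun y hy => ?_⟩
  obtain ⟨z, hxz, hzy⟩ := exists_dist_le_dist_le_of_dist_le_add hgeo
    (sub_nonneg.2 (min_le_right _ _)) hs.le (by rw [sub_add_cancel]; exact mem_closedBall'.1 hy)
  obtain ⟨w, hw, hzw⟩ := mem_iUnion₂.1 (hcover (mem_closedBall'.2 hxz))
  refine mem_iUnion₂.2 ⟨w, hw, ?_⟩
  rw [mem_ball] at hzw ⊢
  linarith [dist_triangle y z w, dist_comm z y, min_le_left (ε / 2) R]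

/-- Hopf–Rinow: if the compact closed balls around `x` had a finite supremum of radii `R`, the
ball of radius `R` would still be compact, and then so would a slightly larger one. -/
theorem properSpace_of_forall_exists_isGeodesic [CompleteSpace X] [LocallyCompactSpace X] :
    ProperSpace X := by
  rcases isEmpty_or_nonempty X with hX | ⟨⟨x⟩⟩
  · infer_instance
  set T := {r : ℝ | IsCompact (closedBall x r)}
  suffices ∀ r, r ∈ T from ProperSpace.of_seq_closedBall tendsto_natCast_atTop_atTop
    (Eventually.of_forall fun n => this n)
  by_contra! ⟨r₀, hr₀⟩
  have hdown : ∀ r ∈ T, ∀ r' ≤ r, r' ∈ T := fun r hr r' hr' =>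
    hr.of_isClosed_subset isClosed_closedBall (closedBall_subset_closedBall hr')
  have hbdd : BddAbove T :=
    ⟨r₀, fun r hr => le_of_not_gt fun h => hr₀ (hdown r hr r₀ h.le)⟩
  obtain ⟨ρ, hρ, hρT⟩ := exists_isCompact_closedBall x
  have hR : 0 < sSup T := hρ.trans_le (le_csSup hbdd hρT)
  have hRT : sSup T ∈ T := by
    refine (totallyBounded_closedBall_of_forall_lt hgeo hR fun r hr => ?_).isCompact_of_isClosed
      isClosed_closedBall
    obtain ⟨r', hr'T, hrr'⟩ := exists_lt_of_lt_csSup ⟨ρ, hρT⟩ hr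
    exact hdown r' hr'T r hrr'.le
  obtain ⟨δ, hδ, hδT⟩ := IsCompact.exists_isCompact_cthickening hRT
  have : sSup T + δ ∈ T := hδT.of_isClosed_subset isClosed_closedBall
    (closedBall_add_subset_cthickening hgeo hR.le hδ.le)
  linarith [le_csSup hbdd this]

end Geodesic

section Glue

variable {ι E X : Type*}

open Classical in
noncomputable def glueOn (S : ι → Set E) (f : ι → E → X) (a : X) (ω : E) : X :=
  if h : ∃ i, ω ∈ S i then f h.choose ω else a

variable {S : ι → Set E} {f : ι → E → X} {a : X} {ω ω' : E}

lemma glueOn_of_mem (hS : Pairwise (Disjoint on S)) {i : ι} (hω : ω ∈ S i) :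
    glueOn S f a ω = f i ω := by
  have h : ∃ j, ω ∈ S j := ⟨i, hω⟩
  rw [glueOn, dif_pos h]
  congr
  by_contra hne
  exact Set.disjoint_left.1 (hS hne) h.choose_spec hω

lemma glueOn_of_forall_notMem (hω : ∀ i, ω ∉ S i) : glueOn S f a ω = a :=
  dif_neg (not_exists.2 hω)

variable [PseudoMetricSpace E] [MetricSpace X] {L : ℝ≥0}

lemma dist_glueOn_le (hS : Pairwise (Disjoint on S)) (hf : ∀ i, LipschitzWith L (f i))
    (hfa : ∀ i, ∀ ω ∉ S i, f i ω = a) (h : ∀ i, ω ∈ S i → ω' ∉ S i) :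
    dist (glueOn S f a ω) a ≤ L * dist ω ω' := by
  by_cases hω : ∃ i, ω ∈ S i
  · obtain ⟨i, hi⟩ := hω
    rw [glueOn_of_mem hS hi, ← hfa i ω' (h i hi)]
    exact (hf i).dist_le_mul ω ω'
  · rw [glueOn_of_forall_notMem (not_exists.1 hω), dist_self]
    positivity

/-- Across two different pieces, route through `a`. -/
lemma lipschitzWith_glueOn (hS : Pairwise (Disjoint on S)) (hf : ∀ i, LipschitzWith L (f i))
    (hfa : ∀ i, ∀ ω ∉ S i, f i ω = a) : LipschitzWith (2 * L) (glueOn S f a) := by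
  refine LipschitzWith.of_dist_le_mul fun ω ω' => ?_
  by_cases h : ∃ i, ω ∈ S i ∧ ω' ∈ S i
  · obtain ⟨i, hω, hω'⟩ := h
    rw [glueOn_of_mem hS hω, glueOn_of_mem hS hω']
    calc dist (f i ω) (f i ω') ≤ L * dist ω ω' := (hf i).dist_le_mul ω ω'
      _ ≤ ↑(2 * L) * dist ω ω' := by push_cast; gcongr; linarith [L.coe_nonneg]
  · simp only [not_exists, not_and] at h
    calc dist (glueOn S f a ω) (glueOn S f a ω')
        ≤ dist (glueOn S f a ω) a + dist (glueOn S f a ω') a := dist_triangle_right _ _ _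
      _ ≤ L * dist ω ω' + L * dist ω' ω :=
        add_le_add (dist_glueOn_le hS hf hfa h)
          (dist_glueOn_le hS hf hfa fun i hω' hω => h i hω hω')
      _ = ↑(2 * L) * dist ω ω' := by rw [dist_comm ω']; push_cast; ring

end Glue

section Bump

variable {E X : Type*} [PseudoMetricSpace E] [MetricSpace X] {γ : ℝ → X} {x y : X}
  {δ : ℝ} (hδ : 0 < δ) (K : Set E)

lemma coe_thickenedIndicator_mem_Icc (ω : E) : (thickenedIndicator hδ K ω : ℝ) ∈ Icc 0 1 :=
  ⟨NNReal.coe_nonneg _, by exact_mod_cast thickenedIndicator_le_one hδ K ω⟩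

lemma IsGeodesic.lipschitzWith_comp_thickenedIndicator (hγ : IsGeodesic γ x y) :
    LipschitzWith (nndist x y * δ.toNNReal⁻¹) fun ω => γ (thickenedIndicator hδ K ω) := by
  rw [← lipschitzOnWith_univ]
  refine hγ.lipschitzOnWith.comp ?_ fun ω _ => coe_thickenedIndicator_mem_Icc hδ K ω
  rw [lipschitzOnWith_univ]
  exact isometry_subtype_coe.lipschitz.comp (lipschitzWith_thickenedIndicator hδ K) |>.weaken
    (by simp)

end Bump

section DisjointThickenings

variable {ι E : Type*} [Finite ι] [MetricSpace E]

lemma exists_pos_pairwise_disjoint_thickening {K : ι → Set E} (hK : ∀ i, IsCompact (K i))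
    (hd : Pairwise (Disjoint on K)) :
    ∃ δ, 0 < δ ∧ Pairwise (Disjoint on fun i => thickening δ (K i)) := by
  have h : ∀ i j, ∀ᶠ δ in 𝓝[>] (0 : ℝ), i ≠ j →
      Disjoint (thickening δ (K i)) (thickening δ (K j)) := by
    intro i j
    by_cases hij : i = j
    · exact Eventually.of_forall fun _ h => absurd hij h
    obtain ⟨δ₀, hδ₀, hdisj⟩ := (hd hij).exists_thickenings (hK i) (hK j).isClosed
    filter_upwards [Ioc_mem_nhdsGT hδ₀] with δ hδ _
    exact hdisj.mono (thickening_mono hδ.2 _) (thickening_mono hδ.2 _)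
  obtain ⟨δ, hδ, hδ0⟩ :=
    ((eventually_all.2 fun i => eventually_all.2 (h i)).and self_mem_nhdsWithin).exists
  exact ⟨δ, hδ0, fun i j => hδ i j⟩

end DisjointThickenings

section Lp

variable {E X : Type*} [MeasurableSpace E] [MetricSpace X] [MeasurableSpace X]
  [OpensMeasurableSpace X] [SecondCountableTopology X] {μ : Measure E}

theorem tendsto_lintegral_edist_rpow_approxOn {f : E → X} (hf : Measurable f) (a : X) {p : ℝ}
    (hp : 0 < p) (hfa : ∫⁻ ω, edist (f ω) a ^ p ∂μ ≠ ∞) :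
    Tendsto (fun n =>
        ∫⁻ ω, edist (f ω) (SimpleFunc.approxOn f hf univ a (mem_univ a) n ω) ^ p ∂μ)
      atTop (𝓝 0) := by
  have h := tendsto_lintegral_of_dominated_convergence (μ := μ) (f := fun _ => 0)
    (fun ω => edist (f ω) a ^ p)
    (fun n => (hf.edist (SimpleFunc.approxOn f hf univ a (mem_univ a) n).measurable).pow_const p)
    (fun n => Eventually.of_forall fun ω => ?_) hfa (Eventually.of_forall fun ω => ?_)
  · simpa using h
  · dsimp only
    rw [edist_comm (f ω), edist_comm (f ω)]
    exact ENNReal.rpow_le_rpow (SimpleFunc.edist_approxOn_le hf (mem_univ a) ω n) hp.le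
  · have h := ((ENNReal.continuous_rpow_const (y := p)).tendsto _).comp
      ((tendsto_const_nhds (x := f ω)).edist
        (SimpleFunc.tendsto_approxOn hf (mem_univ a) (x := ω) (by simp)))
    simpa [ENNReal.zero_rpow_of_pos hp, Function.comp_def] using h

theorem lintegral_edist_rpow_le {f g h : E → X} (hf : Measurable f) (hg : Measurable g) {p : ℝ}
    (hp : 1 ≤ p) :
    ∫⁻ ω, edist (f ω) (h ω) ^ p ∂μ ≤
      2 ^ (p - 1) *
        (∫⁻ ω, edist (f ω) (g ω) ^ p ∂μ + ∫⁻ ω, edist (g ω) (h ω) ^ p ∂μ) := by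
  calc ∫⁻ ω, edist (f ω) (h ω) ^ p ∂μ
      ≤ ∫⁻ ω, 2 ^ (p - 1) * (edist (f ω) (g ω) ^ p + edist (g ω) (h ω) ^ p) ∂μ :=
        lintegral_mono fun ω =>
          (ENNReal.rpow_le_rpow (edist_triangle _ _ _) (by linarith)).trans
            (ENNReal.rpow_add_le_mul_rpow_add_rpow _ _ hp)
    _ = _ := by
      rw [lintegral_const_mul' _ _ (rpow_ne_top_of_nonneg (by linarith) ofNat_ne_top),
        lintegral_add_left ((hf.edist hg).pow_const p)]

end Lp

section Approximation

variable {E X : Type*} [MetricSpace E] [MeasurableSpace E] [OpensMeasurableSpace E]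
  [MetricSpace X] {μ : Measure E} [IsFiniteMeasure μ] [μ.InnerRegularCompactLTTop]
  (hgeo : ∀ x y : X, ∃ γ : ℝ → X, IsGeodesic γ x y)
include hgeo

theorem MeasureTheory.SimpleFunc.exists_lipschitzWith_measure_ne_lt (g : SimpleFunc E X)
    {a : X} {M : ℝ} (hM : ∀ ω, dist (g ω) a ≤ M) {η : ℝ≥0∞} (hη : η ≠ 0) :
    ∃ h : E → X, (∃ L, LipschitzWith L h) ∧ (∀ ω, dist (h ω) a ≤ M) ∧
      μ {ω | h ω ≠ g ω} < η := by
  classical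
  choose γ hγ using hgeo a
  have hMv : ∀ v : g.range, dist a v ≤ M := fun ⟨v, hv⟩ => by
    obtain ⟨ω, rfl⟩ := SimpleFunc.mem_range.1 hv
    exact dist_comm a (g ω) ▸ hM ω
  obtain ⟨η', hη', hη'η⟩ :=
    ENNReal.exists_pos_mul_lt (natCast_ne_top (Fintype.card g.range)) hη
  choose K hKg hK hKμ using fun v : g.range =>
    (g.measurableSet_fiber v).exists_isCompact_sdiff_lt (measure_ne_top μ _) hη'.ne'
  have hKdisj : Pairwise (Disjoint on K) := fun v w hvw =>
    ((disjoint_singleton.2 (Subtype.coe_ne_coe.2 hvw)).preimage g).mono (hKg v) (hKg w)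
  obtain ⟨δ, hδ, hδdisj⟩ := exists_pos_pairwise_disjoint_thickening hK hKdisj
  set f : g.range → E → X := fun v ω => γ v (thickenedIndicator hδ (K v) ω)
  have hfa : ∀ v, ∀ ω ∉ thickening δ (K v), f v ω = a := fun v ω hω => by
    simp only [f, thickenedIndicator_zero hδ _ hω, NNReal.coe_zero, (hγ v).1]
  refine ⟨glueOn (fun v => thickening δ (K v)) f a, ⟨_, lipschitzWith_glueOn hδdisj
    (L := M.toNNReal * δ.toNNReal⁻¹) (fun v => ?_) hfa⟩, fun ω => ?_, ?_⟩
  · refine ((hγ v).lipschitzWith_comp_thickenedIndicator hδ (K v)).weaken ?_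
    gcongr
    exact Real.toNNReal_coe (r := nndist a v) ▸ Real.toNNReal_le_toNNReal (hMv v)
  · rw [glueOn]
    split_ifs with h
    · exact dist_comm a _ ▸
        ((hγ _).dist_le (coe_thickenedIndicator_mem_Icc hδ _ ω)).trans (hMv _)
    · exact (dist_self a).symm ▸ dist_nonneg.trans (hM ω)
  · have hsub : {ω | glueOn (fun v => thickening δ (K v)) f a ω ≠ g ω} ⊆
        ⋃ v : g.range, g ⁻¹' {(v : X)} \ K v := fun ω hω => by
      set v : g.range := ⟨g ω, g.mem_range_self ω⟩
      refine mem_iUnion.2 ⟨v, rfl, fun hωK => hω ?_⟩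
      rw [glueOn_of_mem hδdisj (self_subset_thickening hδ _ hωK)]
      simp only [f, thickenedIndicator_one hδ _ hωK, NNReal.coe_one, (hγ v).2.1, v]
    calc μ {ω | glueOn (fun v => thickening δ (K v)) f a ω ≠ g ω}
        ≤ ∑ v : g.range, μ (g ⁻¹' {(v : X)} \ K v) := (measure_mono hsub).trans
          (measure_iUnion_fintype_le μ _)
      _ ≤ ∑ _v : g.range, η' := Finset.sum_le_sum fun v _ => (hKμ v).le
      _ < η := by rwa [Finset.sum_const, Finset.card_univ, nsmul_eq_mul, mul_comm]

theorem MeasureTheory.SimpleFunc.exists_lipschitzWith_lintegral_edist_rpow_lt [Nonempty X]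
    (g : SimpleFunc E X) {p : ℝ} (hp : 0 < p) {c : ℝ≥0∞} (hc : c ≠ 0) :
    ∃ h : E → X, (∃ L, LipschitzWith L h) ∧
      ∫⁻ ω, edist (g ω) (h ω) ^ p ∂μ < c := by
  obtain ⟨a⟩ := ‹Nonempty X›
  obtain ⟨M, hM⟩ := (g.map (dist · a)).exists_forall_le
  simp only [map_apply] at hM
  set C := ENNReal.ofReal (2 * M) ^ p
  obtain ⟨η, hη, hηC⟩ :=
    ENNReal.exists_pos_mul_lt (a := C) (rpow_ne_top_of_nonneg hp.le ofReal_ne_top) hc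
  obtain ⟨h, hLip, hha, hμ⟩ := g.exists_lipschitzWith_measure_ne_lt hgeo (μ := μ) hM hη.ne'
  refine ⟨h, hLip, ?_⟩
  calc ∫⁻ ω, edist (g ω) (h ω) ^ p ∂μ
      ≤ ∫⁻ ω, {ω | h ω ≠ g ω}.indicator (fun _ => C) ω ∂μ :=
        MeasureTheory.lintegral_mono fun ω => ?_
    _ ≤ C * μ {ω | h ω ≠ g ω} := lintegral_indicator_const_le _ _
    _ ≤ C * η := by gcongr
    _ < c := by rwa [mul_comm]
  by_cases hω : h ω = g ω
  · simp [hω, ENNReal.zero_rpow_of_pos hp]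
  · rw [indicator_of_mem hω, edist_dist]
    show _ ≤ ENNReal.ofReal (2 * M) ^ p
    gcongr
    linarith [dist_triangle_right (g ω) (h ω) a, hM ω, hha ω]

end Approximation

lemma ofReal_dist_rpow {X : Type*} [PseudoMetricSpace X] (x y : X) {p : ℝ} (hp : 0 ≤ p) :
    ENNReal.ofReal (dist x y ^ p) = edist x y ^ p := by
  rw [edist_dist, ENNReal.ofReal_rpow_of_nonneg dist_nonneg hp]

theorem uniformly_continuous_dense_in_Lp_general
    {n : ℕ}
    (Ω : Set (EuclideanSpace ℝ (Fin n))) (hΩb : Bornology.IsBounded Ω)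
    {X : Type*} [MetricSpace X] [CompleteSpace X] [LocallyCompactSpace X]
    [MeasurableSpace X] [BorelSpace X]
    (hgeo : ∀ x y : X, ∃ γ : ℝ → X, γ 0 = x ∧ γ 1 = y ∧
      ∀ s ∈ Icc (0:ℝ) 1, ∀ t ∈ Icc (0:ℝ) 1, dist (γ s) (γ t) = |s - t| * dist x y)
    (p : ℝ) (hp : 1 ≤ p)
    (f : EuclideanSpace ℝ (Fin n) → X) (hf : Measurable f)
    (a : X) (hfa : ∫⁻ ω in Ω, ENNReal.ofReal (dist (f ω) a ^ p) < ⊤)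
    (ε : ℝ) (hε : 0 < ε) :
    ∃ h : EuclideanSpace ℝ (Fin n) → X, UniformContinuousOn h Ω ∧
      ∫⁻ ω in Ω, ENNReal.ofReal (dist (f ω) (h ω) ^ p) < ENNReal.ofReal ε := by
  have : ProperSpace X := properSpace_of_forall_exists_isGeodesic hgeo
  have : IsFiniteMeasure (volume.restrict Ω) := isFiniteMeasure_restrict.2 hΩb.measure_lt_top.ne
  have : Nonempty X := ⟨a⟩
  have hp0 : 0 < p := zero_lt_one.trans_le hp
  simp_rw [ofReal_dist_rpow _ _ hp0.le] at hfa ⊢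
  obtain ⟨c, hc, hcε⟩ := ENNReal.exists_pos_mul_lt (a := 2 ^ (p - 1) * 2)
    (mul_ne_top (rpow_ne_top_of_nonneg (by linarith) ofNat_ne_top) ofNat_ne_top)
    (ofReal_pos.2 hε).ne'
  obtain ⟨k, hfg⟩ :=
    ((tendsto_lintegral_edist_rpow_approxOn hf a hp0 hfa.ne).eventually_lt_const hc).exists
  set g := SimpleFunc.approxOn f hf univ a (mem_univ a) k
  obtain ⟨h, ⟨L, hL⟩, hgh⟩ :=
    g.exists_lipschitzWith_lintegral_edist_rpow_lt hgeo (μ := volume.restrict Ω) hp0 hc.ne'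
  refine ⟨h, hL.uniformContinuous.uniformContinuousOn, ?_⟩
  calc ∫⁻ ω in Ω, edist (f ω) (h ω) ^ p
      ≤ 2 ^ (p - 1) *
          ((∫⁻ ω in Ω, edist (f ω) (g ω) ^ p) + ∫⁻ ω in Ω, edist (g ω) (h ω) ^ p) :=
        lintegral_edist_rpow_le hf g.measurable hp
    _ ≤ 2 ^ (p - 1) * (c + c) := by gcongr
    _ = c * (2 ^ (p - 1) * 2) := by ring
    _ < ENNReal.ofReal ε := hcε

/-- In a locally compact Hadamard space `X`, the uniformly continuous
maps `Ω → X` are dense in `L^p(Ω, X)`. -/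
theorem uniformly_continuous_dense_in_Lp
    {n : ℕ} (hn : 1 ≤ n)
    (Ω : Set (EuclideanSpace ℝ (Fin n))) (hΩo : IsOpen Ω) (hΩb : Bornology.IsBounded Ω)
    {X : Type*} [MetricSpace X] [CompleteSpace X] [LocallyCompactSpace X]
    [MeasurableSpace X] [BorelSpace X]
    (hgeo : ∀ x y : X, ∃ γ : ℝ → X, γ 0 = x ∧ γ 1 = y ∧
      ∀ s ∈ Icc (0:ℝ) 1, ∀ t ∈ Icc (0:ℝ) 1, dist (γ s) (γ t) = |s - t| * dist x y)
    (h4 : ∀ x y v w : X, dist x v ^ 2 + dist y w ^ 2 ≤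
      dist x w ^ 2 + dist y v ^ 2 + 2 * dist x y * dist v w)
    (p : ℝ) (hp : 1 ≤ p)
    (f : EuclideanSpace ℝ (Fin n) → X) (hf : Measurable f)
    (a : X) (hfa : ∫⁻ ω in Ω, ENNReal.ofReal (dist (f ω) a ^ p) < ⊤)
    (ε : ℝ) (hε : 0 < ε) :
    ∃ h : EuclideanSpace ℝ (Fin n) → X, UniformContinuousOn h Ω ∧
      ∫⁻ ω in Ω, ENNReal.ofReal (dist (f ω) (h ω) ^ p) < ENNReal.ofReal ε :=
  uniformly_continuous_dense_in_Lp_general Ω hΩb hgeo p hp f hf a hfa ε hε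
end

section
/- Let Ω ⊂ ℝⁿ be an open bounded set with the Lebesgue measure, let (X,d) be a geodesic metric space, and let p ∈ [1,∞). Then every simple function can be approximated by uniformly continuous maps: for every Lebesgue-measurable g : Ω → X with finite range and every ε > 0, there exists a uniformly continuous map h : Ω → X such that ∫_Ω d(g(ω),h(ω))^p dω < ε; moreover h can be chosen constant outside a compact subset of Ω. -/
open MeasureTheory Set Metric

/-- In a geodesic metric space `X`, every simple function on `Ω` can be
approximated in the `L^p`-sense by uniformly continuous maps which are constant outside
a compact subset of `Ω`. -/
theorem simple_approx_by_uniformly_continuous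
    {n : ℕ} (hn : 1 ≤ n)
    (Ω : Set (EuclideanSpace ℝ (Fin n))) (hΩo : IsOpen Ω) (hΩb : Bornology.IsBounded Ω)
    {X : Type*} [MetricSpace X] [MeasurableSpace X] [BorelSpace X]
    (hgeo : ∀ x y : X, ∃ γ : ℝ → X, γ 0 = x ∧ γ 1 = y ∧
      ∀ s ∈ Icc (0:ℝ) 1, ∀ t ∈ Icc (0:ℝ) 1, dist (γ s) (γ t) = |s - t| * dist x y)
    (p : ℝ) (hp : 1 ≤ p)
    (g : EuclideanSpace ℝ (Fin n) → X) (hg : Measurable g) (hgfin : (g '' Ω).Finite)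
    (ε : ℝ) (hε : 0 < ε) :
    ∃ h : EuclideanSpace ℝ (Fin n) → X, UniformContinuousOn h Ω ∧
      (∃ K : Set (EuclideanSpace ℝ (Fin n)), IsCompact K ∧ K ⊆ Ω ∧
        ∃ c : X, ∀ x ∈ Ω \ K, h x = c) ∧
      ∫⁻ ω in Ω, ENNReal.ofReal (dist (g ω) (h ω) ^ p) < ENNReal.ofReal ε := by
  classical
  set μ : Measure (EuclideanSpace ℝ (Fin n)) := volume with hμdef
  set c : X := g 0 with hcdef
  set V : Finset X := hgfin.toFinset with hVdef
  have hmemV : ∀ x ∈ Ω, g x ∈ V := fun x hx => hgfin.mem_toFinset.2 (mem_image_of_mem g hx)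
  -- geodesics from `c` to each point
  choose γ hγ0 hγ1 hγd using fun v => hgeo c v
  -- the radius `D` of the value set around `c`
  set D : NNReal := V.sup fun v => nndist c v with hDdef
  have hDle : ∀ v ∈ V, dist c v ≤ (D : ℝ) := by
    intro v hv
    exact_mod_cast (Finset.le_sup (f := fun v => nndist c v) hv)
  have hD0 : (0:ℝ) ≤ (D : ℝ) := D.coe_nonneg
  -- the uniform bound `B` on the integrand
  set B : ENNReal := ENNReal.ofReal ((2 * (D : ℝ)) ^ p) + 1 with hBdef
  have hB0 : B ≠ 0 := by simp [hBdef]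
  have hBt : B ≠ ⊤ := by simp [hBdef]
  set N : ENNReal := B * (V.card + 1) with hNdef
  have hN0 : N ≠ 0 := by
    simp only [hNdef, ne_eq, mul_eq_zero, not_or]
    refine ⟨hB0, fun hcon => ?_⟩
    have h1 : (1:ENNReal) ≤ (V.card : ENNReal) + 1 := le_add_self
    rw [hcon] at h1
    exact (by norm_num : ¬ (1:ENNReal) ≤ 0) h1
  have hNt : N ≠ ⊤ := by
    simp only [hNdef]
    exact ENNReal.mul_ne_top hBt (by simp)
  set δ : ENNReal := (ENNReal.ofReal ε / 2) / N with hδdef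
  have hδ0 : δ ≠ 0 := by
    rw [hδdef, ENNReal.div_ne_zero]
    refine ⟨?_, hNt⟩
    rw [ENNReal.div_ne_zero]
    exact ⟨by simp [hε, hε.le], by simp⟩
  -- the level sets
  set A : X → Set (EuclideanSpace ℝ (Fin n)) := fun v => Ω ∩ g ⁻¹' {v} with hAdef
  have hAmeas : ∀ v, MeasurableSet (A v) :=
    fun v => hΩo.measurableSet.inter (hg (measurableSet_singleton v))
  have hAfin : ∀ v, μ (A v) ≠ ⊤ :=
    fun v => ((measure_mono inter_subset_left).trans_lt hΩb.measure_lt_top).ne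
  have hAdisj : ∀ v w, v ≠ w → Disjoint (A v) (A w) := by
    intro v w hvw
    refine Set.disjoint_left.2 fun x hxv hxw => ?_
    exact hvw (hxv.2.symm.trans hxw.2)
  -- compact subsets of the level sets
  have hKex : ∀ v : X, ∃ K ⊆ A v, IsCompact K ∧ μ (A v) < μ K + δ :=
    fun v => (hAmeas v).exists_isCompact_lt_add (hAfin v) hδ0
  choose K hKA hKc hKμ using hKex
  have hKμ' : ∀ v, μ (A v \ K v) < δ := by
    intro v
    refine measure_diff_lt_of_lt_add ((hKc v).isClosed.measurableSet.nullMeasurableSet)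
      (hKA v) ?_ (hKμ v)
    exact ((measure_mono (hKA v)).trans_lt (lt_top_iff_ne_top.2 (hAfin v))).ne
  have hKdisj : ∀ v w, v ≠ w → Disjoint (K v) (K w) :=
    fun v w hvw => ((hAdisj v w hvw).mono (hKA v) (hKA w))
  -- the union of the compacts
  set KU : Set (EuclideanSpace ℝ (Fin n)) := ⋃ v ∈ V, K v with hKUdef
  have hKUc : IsCompact KU := V.finite_toSet.isCompact_biUnion fun v _ => hKc v
  have hKUΩ : KU ⊆ Ω := Set.iUnion₂_subset fun v _ => (hKA v).trans inter_subset_left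
  -- choice of the radius r
  obtain ⟨r0, hr0, hr0Ω⟩ := hKUc.exists_cthickening_subset_open hΩo hKUΩ
  have hpair : ∀ q : X × X, ∃ d : ℝ, 0 < d ∧
      (q.1 ≠ q.2 → Disjoint (cthickening d (K q.1)) (cthickening d (K q.2))) := by
    intro q
    by_cases hq : q.1 ≠ q.2
    · obtain ⟨d, hd, hdis⟩ := (hKdisj _ _ hq).exists_cthickenings (hKc _) (hKc _).isClosed
      exact ⟨d, hd, fun _ => hdis⟩
    · exact ⟨1, one_pos, fun hq' => absurd hq' hq⟩
  choose dp hdp hdisp using hpair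
  set S : Finset ℝ := insert r0 ((V ×ˢ V).image dp) with hSdef
  have hSne : S.Nonempty := ⟨r0, Finset.mem_insert_self _ _⟩
  set r : ℝ := S.min' hSne with hrdef
  have hrS : ∀ s ∈ S, r ≤ s := fun s hs => Finset.min'_le _ _ hs
  have hrpos : 0 < r := by
    have hmem : r ∈ S := S.min'_mem hSne
    rcases Finset.mem_insert.1 hmem with hcase | hcase
    · exact hcase ▸ hr0
    · obtain ⟨q, _, hq⟩ := Finset.mem_image.1 hcase
      exact hq ▸ hdp q
  have hrr0 : r ≤ r0 := hrS _ (Finset.mem_insert_self _ _)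
  have hrdisj : ∀ v ∈ V, ∀ w ∈ V, v ≠ w →
      Disjoint (cthickening r (K v)) (cthickening r (K w)) := by
    intro v hv w hw hvw
    have hle : r ≤ dp (v, w) :=
      hrS _ (Finset.mem_insert_of_mem (Finset.mem_image_of_mem dp (Finset.mk_mem_product hv hw)))
    exact (hdisp (v, w) hvw).mono (cthickening_mono hle _) (cthickening_mono hle _)
  -- the bump functions
  set ψ : X → EuclideanSpace ℝ (Fin n) → ℝ := fun v x =>
    if (K v).Nonempty then max 0 (1 - infDist x (K v) / r) else 0 with hψdef
  have hψ0 : ∀ v x, 0 ≤ ψ v x := by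
    intro v x
    simp only [hψdef]
    split <;> simp
  have hψ1 : ∀ v x, ψ v x ≤ 1 := by
    intro v x
    simp only [hψdef]
    split
    · refine max_le zero_le_one ?_
      have h1 : (0:ℝ) ≤ infDist x (K v) / r := div_nonneg infDist_nonneg hrpos.le
      linarith
    · exact zero_le_one
  have hψone : ∀ v x, x ∈ K v → ψ v x = 1 := by
    intro v x hx
    have hne : (K v).Nonempty := ⟨x, hx⟩
    simp only [hψdef, if_pos hne, infDist_zero_of_mem hx, zero_div, sub_zero]
    simp
  have hψmem : ∀ v x, 0 < ψ v x → x ∈ cthickening r (K v) := by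
    intro v x hx
    by_cases hne : (K v).Nonempty
    · simp only [hψdef, if_pos hne, lt_max_iff, lt_self_iff_false, false_or] at hx
      have hlt : infDist x (K v) < r := by
        have h2 : infDist x (K v) / r < 1 := by linarith
        calc infDist x (K v) = (infDist x (K v) / r) * r := by field_simp
          _ < 1 * r := by exact mul_lt_mul_of_pos_right h2 hrpos
          _ = r := one_mul r
      exact thickening_subset_cthickening r (K v)
        ((mem_thickening_iff_infDist_lt hne).2 hlt)
    · simp only [hψdef, if_neg hne] at hx
      exact absurd hx (lt_irrefl 0)
  have hψlip : ∀ v x y, ψ v x ≤ ψ v y + dist x y / r := by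
    intro v x y
    have hd2 : (0:ℝ) ≤ dist x y / r := div_nonneg dist_nonneg hrpos.le
    by_cases hne : (K v).Nonempty
    · simp only [hψdef, if_pos hne]
      have h1 : infDist y (K v) ≤ infDist x (K v) + dist x y := by
        rw [dist_comm]; exact infDist_le_infDist_add_dist
      refine max_le (by positivity) ?_
      have h2 : infDist y (K v) / r ≤ (infDist x (K v) + dist x y) / r := by gcongr
      rw [add_div] at h2
      have h3 : 1 - infDist x (K v) / r ≤ (1 - infDist y (K v) / r) + dist x y / r := by
        linarith
      refine h3.trans ?_
      gcongr
      exact le_max_right _ _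
    · simp only [hψdef, if_neg hne]
      positivity
  have hψlip' : ∀ v x y, |ψ v x - ψ v y| ≤ dist x y / r := by
    intro v x y
    rw [abs_sub_le_iff]
    refine ⟨by linarith [hψlip v x y], ?_⟩
    have h1 := hψlip v y x
    rw [dist_comm] at h1
    linarith
  -- uniqueness of the active index
  have huniq : ∀ x : EuclideanSpace ℝ (Fin n), ∀ v ∈ V, ∀ w ∈ V, 0 < ψ v x → 0 < ψ w x → v = w := by
    intro x v hv w hw hvx hwx
    by_contra hvw
    exact (hrdisj v hv w hw hvw).ne_of_mem (hψmem v x hvx) (hψmem w x hwx) rfl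
  -- definition of h
  set h : EuclideanSpace ℝ (Fin n) → X := fun x =>
    if hx : ∃ v ∈ V, 0 < ψ v x then γ hx.choose (ψ hx.choose x) else c with hhdef
  have hval : ∀ x : EuclideanSpace ℝ (Fin n), ∀ v ∈ V, 0 < ψ v x → h x = γ v (ψ v x) := by
    intro x v hv hvx
    have hx : ∃ v ∈ V, 0 < ψ v x := ⟨v, hv, hvx⟩
    simp only [hhdef, dif_pos hx]
    obtain ⟨hw, hwpos⟩ := hx.choose_spec
    rw [huniq x _ hw v hv hwpos hvx]
  have hval0 : ∀ x : EuclideanSpace ℝ (Fin n), ¬(∃ v ∈ V, 0 < ψ v x) → h x = c := by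
    intro x hx
    simp only [hhdef, dif_neg hx]
  have hψzero : ∀ z : EuclideanSpace ℝ (Fin n), ¬(∃ v ∈ V, 0 < ψ v z) → ∀ v ∈ V, ψ v z = 0 := by
    intro z hz v hv
    push_neg at hz
    exact le_antisymm (hz v hv) (hψ0 v z)
  -- distances along geodesics
  have hγdist : ∀ (v : X) (x : EuclideanSpace ℝ (Fin n)), dist (γ v (ψ v x)) c = ψ v x * dist c v := by
    intro v x
    have h1 : ψ v x ∈ Icc (0:ℝ) 1 := ⟨hψ0 v x, hψ1 v x⟩
    have h0 : (0:ℝ) ∈ Icc (0:ℝ) 1 := ⟨le_refl 0, zero_le_one⟩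
    have h2 := hγd v (ψ v x) h1 0 h0
    rw [hγ0 v] at h2
    rw [h2, sub_zero, abs_of_nonneg (hψ0 v x)]
  have hdistc : ∀ x : EuclideanSpace ℝ (Fin n), dist (h x) c ≤ (D : ℝ) := by
    intro x
    by_cases hx : ∃ v ∈ V, 0 < ψ v x
    · obtain ⟨v, hv, hvx⟩ := hx
      rw [hval x v hv hvx, hγdist v x]
      calc ψ v x * dist c v ≤ 1 * dist c v :=
            mul_le_mul_of_nonneg_right (hψ1 v x) dist_nonneg
        _ = dist c v := one_mul _
        _ ≤ (D : ℝ) := hDle v hv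
    · rw [hval0 x hx]
      simp [hD0]
  -- Lipschitz estimate
  have hCnn : (0:ℝ) ≤ 2 * (D : ℝ) / r := by positivity
  -- the one-sided mixed case
  have hmixed : ∀ x y : EuclideanSpace ℝ (Fin n), (∃ v ∈ V, 0 < ψ v x) → ¬(∃ w ∈ V, 0 < ψ w y) →
      dist (h x) (h y) ≤ (2 * (D : ℝ) / r) * dist x y := by
    intro x y hx hy
    obtain ⟨v, hv, hvx⟩ := hx
    have hvy : ψ v y = 0 := hψzero y hy v hv
    have b1 : ψ v x ≤ dist x y / r := by
      have h1 := hψlip v x y; rw [hvy] at h1; linarith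
    rw [hval x v hv hvx, hval0 y hy, hγdist v x]
    calc ψ v x * dist c v ≤ (dist x y / r) * (D : ℝ) :=
          mul_le_mul b1 (hDle v hv) dist_nonneg (div_nonneg dist_nonneg hrpos.le)
      _ ≤ (2 * (D:ℝ) / r) * dist x y := by
          rw [div_mul_eq_mul_div, div_mul_eq_mul_div]
          gcongr ?_ / r
          nlinarith [dist_nonneg (x := x) (y := y)]
  have hlip : ∀ x y : EuclideanSpace ℝ (Fin n), dist (h x) (h y) ≤ (2 * (D : ℝ) / r) * dist x y := by
    intro x y
    by_cases hx : ∃ v ∈ V, 0 < ψ v x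
    · by_cases hy : ∃ w ∈ V, 0 < ψ w y
      · obtain ⟨v, hv, hvx⟩ := hx
        obtain ⟨w, hw, hwy⟩ := hy
        by_cases hvw : v = w
        · subst hvw
          rw [hval x v hv hvx, hval y v hv hwy]
          have h1 : ψ v x ∈ Icc (0:ℝ) 1 := ⟨hψ0 v x, hψ1 v x⟩
          have h2 : ψ v y ∈ Icc (0:ℝ) 1 := ⟨hψ0 v y, hψ1 v y⟩
          rw [hγd v (ψ v x) h1 (ψ v y) h2]
          calc |ψ v x - ψ v y| * dist c v ≤ (dist x y / r) * (D : ℝ) :=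
                mul_le_mul (hψlip' v x y) (hDle v hv) dist_nonneg
                  (div_nonneg dist_nonneg hrpos.le)
            _ ≤ (2 * (D:ℝ) / r) * dist x y := by
                rw [div_mul_eq_mul_div, div_mul_eq_mul_div]
                gcongr ?_ / r
                nlinarith [dist_nonneg (x := x) (y := y)]
        · have hvy : ψ v y = 0 := by
            by_contra hne
            exact hvw (huniq y v hv w hw (lt_of_le_of_ne (hψ0 v y) (Ne.symm hne)) hwy)
          have hwx : ψ w x = 0 := by
            by_contra hne
            exact hvw (huniq x v hv w hw hvx (lt_of_le_of_ne (hψ0 w x) (Ne.symm hne)))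
          rw [hval x v hv hvx, hval y w hw hwy]
          have b1 : ψ v x ≤ dist x y / r := by
            have h1 := hψlip v x y; rw [hvy] at h1; linarith
          have b2 : ψ w y ≤ dist x y / r := by
            have h1 := hψlip w y x; rw [hwx, dist_comm] at h1; linarith
          calc dist (γ v (ψ v x)) (γ w (ψ w y))
              ≤ dist (γ v (ψ v x)) c + dist c (γ w (ψ w y)) := dist_triangle _ _ _
            _ = ψ v x * dist c v + ψ w y * dist c w := by
                rw [hγdist v x, dist_comm c (γ w (ψ w y)), hγdist w y]
            _ ≤ (dist x y / r) * (D:ℝ) + (dist x y / r) * (D:ℝ) := by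
                have hd2 : (0:ℝ) ≤ dist x y / r := div_nonneg dist_nonneg hrpos.le
                have e1 : ψ v x * dist c v ≤ (dist x y / r) * (D:ℝ) :=
                  mul_le_mul b1 (hDle v hv) dist_nonneg hd2
                have e2 : ψ w y * dist c w ≤ (dist x y / r) * (D:ℝ) :=
                  mul_le_mul b2 (hDle w hw) dist_nonneg hd2
                linarith
            _ = (2 * (D:ℝ) / r) * dist x y := by ring
      · exact hmixed x y hx hy
    · by_cases hy : ∃ w ∈ V, 0 < ψ w y
      · rw [dist_comm, dist_comm x y]
        exact hmixed y x hy hx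
      · rw [hval0 x hx, hval0 y hy]
        simp [mul_nonneg hCnn dist_nonneg]
  -- uniform continuity
  have hUC : UniformContinuousOn h Ω := by
    have hlw : LipschitzWith (2 * (D:ℝ) / r).toNNReal h := by
      apply LipschitzWith.of_dist_le_mul
      intro x y
      rw [Real.coe_toNNReal _ hCnn]
      exact hlip x y
    exact (LipschitzWith.lipschitzOnWith hlw (s := Ω)).uniformContinuousOn
  -- the compact set
  set Kc : Set (EuclideanSpace ℝ (Fin n)) := cthickening r KU with hKcdef
  have hKccomp : IsCompact Kc := hKUc.cthickening
  have hKcΩ : Kc ⊆ Ω := (cthickening_mono hrr0 _).trans hr0Ω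
  have hconst : ∀ x ∈ Ω \ Kc, h x = c := by
    intro x hx
    apply hval0
    rintro ⟨v, hv, hvx⟩
    apply hx.2
    refine cthickening_subset_of_subset r ?_ (hψmem v x hvx)
    exact Set.subset_biUnion_of_mem (u := K) hv
  refine ⟨h, hUC, ⟨Kc, hKccomp, hKcΩ, c, hconst⟩, ?_⟩
  -- the integral estimate
  have hgh : ∀ v ∈ V, ∀ x ∈ K v, h x = g x := by
    intro v hv x hx
    have h1 : ψ v x = 1 := hψone v x hx
    have hpos : 0 < ψ v x := by rw [h1]; exact one_pos
    have hgx : g x = v := (hKA v hx).2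
    rw [hval x v hv hpos, h1, hγ1 v, hgx]
  have hbound : ∀ x ∈ Ω, ENNReal.ofReal (dist (g x) (h x) ^ p) ≤
      (Ω \ KU).indicator (fun _ => B) x := by
    intro x hxΩ
    by_cases hxK : x ∈ KU
    · obtain ⟨v, hvV, hvx⟩ : ∃ v ∈ V, x ∈ K v := by
        simpa [hKUdef] using hxK
      rw [hgh v hvV x hvx, dist_self, Real.zero_rpow (by linarith : p ≠ 0)]
      simp
    · have hmem : x ∈ Ω \ KU := ⟨hxΩ, hxK⟩
      rw [Set.indicator_of_mem hmem]
      have hd : dist (g x) (h x) ≤ 2 * (D:ℝ) := by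
        calc dist (g x) (h x) ≤ dist (g x) c + dist c (h x) := dist_triangle _ _ _
          _ ≤ (D:ℝ) + (D:ℝ) := by
              gcongr
              · rw [dist_comm]; exact hDle _ (hmemV x hxΩ)
              · rw [dist_comm]; exact hdistc x
          _ = 2 * (D:ℝ) := by ring
      calc ENNReal.ofReal (dist (g x) (h x) ^ p)
          ≤ ENNReal.ofReal ((2 * (D:ℝ)) ^ p) :=
            ENNReal.ofReal_le_ofReal (Real.rpow_le_rpow dist_nonneg hd (by linarith))
        _ ≤ B := le_self_add
  have hKUmeas : MeasurableSet (Ω \ KU) := hΩo.measurableSet.diff hKUc.isClosed.measurableSet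
  have hμsmall : μ (Ω \ KU) ≤ V.card * δ := by
    have hsub : Ω \ KU ⊆ ⋃ v ∈ V, (A v \ K v) := by
      intro x hx
      have hv := hmemV x hx.1
      refine mem_biUnion hv ⟨⟨hx.1, rfl⟩, fun hxK => hx.2 ?_⟩
      rw [hKUdef]
      exact mem_biUnion hv hxK
    calc μ (Ω \ KU) ≤ μ (⋃ v ∈ V, (A v \ K v)) := measure_mono hsub
      _ ≤ ∑ v ∈ V, μ (A v \ K v) := measure_biUnion_finset_le _ _
      _ ≤ ∑ _v ∈ V, δ := Finset.sum_le_sum fun v _ => (hKμ' v).le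
      _ = V.card * δ := by rw [Finset.sum_const, nsmul_eq_mul]
  calc ∫⁻ ω in Ω, ENNReal.ofReal (dist (g ω) (h ω) ^ p) ∂μ
      ≤ ∫⁻ ω in Ω, (Ω \ KU).indicator (fun _ => B) ω ∂μ :=
        setLIntegral_mono (measurable_const.indicator hKUmeas) hbound
    _ = B * μ ((Ω \ KU) ∩ Ω) := by
        rw [lintegral_indicator hKUmeas, Measure.restrict_restrict hKUmeas, setLIntegral_const]
    _ ≤ B * (V.card * δ) := by
        gcongr
        exact (measure_mono inter_subset_left).trans hμsmall
    _ ≤ N * δ := by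
        rw [hNdef]
        calc B * (↑V.card * δ) = (B * ↑V.card) * δ := by ring
          _ ≤ (B * (↑V.card + 1)) * δ := by
              gcongr
              exact le_self_add
    _ ≤ ENNReal.ofReal ε / 2 := by
        rw [hδdef]
        exact ENNReal.mul_div_le
    _ < ENNReal.ofReal ε :=
        ENNReal.half_lt_self (by simp [hε]) (by simp)
end

section
/- Let Ω ⊂ ℝⁿ be an open bounded set with the Lebesgue measure, let (X,d) be a locally compact Hadamard space, and let p ∈ [1,∞). Let f ∈ L^p(Ω,X), and let {φ⁽ʲ⁾}_{j∈ℕ} and φ̂ be admissible diffeomorphisms of Ω such that sup_{x∈Ω} |φ⁽ʲ⁾(x) − φ̂(x)| → 0 as j → ∞ and |det Dφ⁽ʲ⁾(x)|⁻¹ ≤ C and |det Dφ̂(x)|⁻¹ ≤ C for all x ∈ Ω, j ∈ ℕ, for some constant C > 0. Then lim_{j→∞} ∫_Ω d(f(φ⁽ʲ⁾(x)), f(φ̂(x)))^p dx = 0. -/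
open MeasureTheory Set Filter

/-- An admissible diffeomorphism of `Ω`: a bijection of `Ω` onto itself which is
continuously differentiable on `Ω` with continuously differentiable inverse. -/
def IsAdmissibleDiffeo {n : ℕ} (Ω : Set (EuclideanSpace ℝ (Fin n)))
    (φ : EuclideanSpace ℝ (Fin n) → EuclideanSpace ℝ (Fin n)) : Prop :=
  Set.BijOn φ Ω Ω ∧ ContDiffOn ℝ 1 φ Ω ∧
    ∃ ψ : EuclideanSpace ℝ (Fin n) → EuclideanSpace ℝ (Fin n),
      (∀ x ∈ Ω, ψ (φ x) = x) ∧ (∀ x ∈ Ω, φ (ψ x) = x) ∧ ContDiffOn ℝ 1 ψ Ω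

/-!
A complete, locally compact geodesic space is proper (Hopf–Rinow), hence second countable, so
Lusin's theorem is available for maps into it.

Since `|det Dφ|⁻¹ ≤ C`, the change of variables formula shows that the push-forward of Lebesgue
measure on `Ω` under any of the diffeomorphisms is at most `C` times Lebesgue measure on `Ω`;
composing with them therefore multiplies `∫_Ω d(·, ·)^p` by at most `C`. Truncating `f` at a
large distance from `a` changes it by little in this sense, so up to a quasi-triangle inequality
for `d^p` it suffices to treat a bounded `g`. Lusin gives a compact `K ⊆ Ω` of almost full
measure on which `g` is uniformly continuous. At points `x` with `φ⁽ʲ⁾ x, φ̂ x ∈ K`, uniform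
convergence makes `d(g (φ⁽ʲ⁾ x), g (φ̂ x))` small; the other points form a set of measure at
most `2 C |Ω \ K|`, on which the integrand is bounded by `(diam g)^p`.
-/

open scoped ENNReal Topology

section HopfRinow

open Metric

def IsGeodesicSpace (X : Type*) [PseudoMetricSpace X] : Prop :=
  ∀ x y : X, ∃ γ : ℝ → X, γ 0 = x ∧ γ 1 = y ∧
    ∀ s ∈ Icc (0:ℝ) 1, ∀ t ∈ Icc (0:ℝ) 1, dist (γ s) (γ t) = |s - t| * dist x y

variable {X : Type*} [PseudoMetricSpace X]

theorem IsGeodesicSpace.closedBall_add_subset_cthickening (hX : IsGeodesicSpace X) (a : X)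
    {t δ : ℝ} (ht : 0 ≤ t) :
    closedBall a (t + δ) ⊆ cthickening δ (closedBall a t) := by
  intro y hy
  rw [mem_closedBall'] at hy
  rcases le_or_gt (dist a y) t with hyt | hyt
  · exact self_subset_cthickening _ (mem_closedBall'.2 hyt)
  obtain ⟨γ, hγ0, hγ1, hγ⟩ := hX a y
  have hd : 0 < dist a y := ht.trans_lt hyt
  set s := t / dist a y
  have hs : s ∈ Icc (0:ℝ) 1 := ⟨by positivity, (div_le_one hd).2 hyt.le⟩
  have has := hγ 0 ⟨le_rfl, zero_le_one⟩ s hs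
  have hsy := hγ s hs 1 ⟨zero_le_one, le_rfl⟩
  rw [hγ0, zero_sub, abs_neg, abs_of_nonneg hs.1, div_mul_cancel₀ _ hd.ne'] at has
  rw [hγ1, abs_of_nonpos (by linarith [hs.2]), neg_sub, sub_mul, one_mul,
    div_mul_cancel₀ _ hd.ne'] at hsy
  exact mem_cthickening_of_dist_le y (γ s) δ _ (mem_closedBall'.2 has.le)
    (by rw [dist_comm, hsy]; linarith)

theorem IsGeodesicSpace.exists_isCompact_closedBall_add [LocallyCompactSpace X]
    (hX : IsGeodesicSpace X) (a : X) {t : ℝ} (ht : 0 ≤ t) (hK : IsCompact (closedBall a t)) :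
    ∃ δ > 0, IsCompact (closedBall a (t + δ)) := by
  obtain ⟨δ, hδ, hδK⟩ := hK.exists_isCompact_cthickening
  exact ⟨δ, hδ, hδK.of_isClosed_subset isClosed_closedBall
    (hX.closedBall_add_subset_cthickening a ht)⟩

theorem IsGeodesicSpace.isCompact_closedBall_of_forall_lt [CompleteSpace X]
    (hX : IsGeodesicSpace X) (a : X) {t : ℝ} (ht : 0 < t)
    (h : ∀ s < t, IsCompact (closedBall a s)) : IsCompact (closedBall a t) := by
  refine (totallyBounded_iff.2 fun ε hε => ?_).isCompact_of_isClosed isClosed_closedBall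
  set s := max (t - ε / 4) (t / 2)
  have hs0 : 0 ≤ s := le_max_of_le_right (by positivity)
  have hst : t - s < ε / 2 := by linarith [le_max_left (t - ε / 4) (t / 2)]
  obtain ⟨u, -, hu, hcover⟩ :=
    (h s (max_lt (by linarith) (by linarith))).finite_cover_balls (half_pos hε)
  refine ⟨u, hu, fun y hy => ?_⟩
  rw [← add_sub_cancel s t] at hy
  obtain ⟨z, hz, hyz⟩ := mem_thickening_iff.1 <| cthickening_subset_thickening' (half_pos hε) hst _
    (hX.closedBall_add_subset_cthickening a hs0 hy)
  obtain ⟨w, hw, hzw⟩ := mem_iUnion₂.1 (hcover hz)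
  rw [mem_ball] at hzw
  exact mem_iUnion₂.2 ⟨w, hw, mem_ball.2 (by linarith [dist_triangle y z w])⟩

theorem IsGeodesicSpace.properSpace [CompleteSpace X] [LocallyCompactSpace X]
    (hX : IsGeodesicSpace X) : ProperSpace X := by
  refine ⟨fun a r => ?_⟩
  by_contra hr
  set S := {t | IsCompact (closedBall a t)}
  have hlower : ∀ t ∈ S, ∀ s ≤ t, s ∈ S := fun t ht s hs =>
    IsCompact.of_isClosed_subset ht isClosed_closedBall (closedBall_subset_closedBall hs)
  obtain ⟨r₀, hr₀, hr₀S⟩ := exists_isCompact_closedBall a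
  have hbdd : BddAbove S := ⟨r, fun t ht => not_lt.1 fun hrt => hr (hlower t ht r hrt.le)⟩
  have hR0 : r₀ ≤ sSup S := le_csSup hbdd hr₀S
  have hR : sSup S ∈ S := hX.isCompact_closedBall_of_forall_lt a (hr₀.trans_le hR0) fun s hs => by
    obtain ⟨t, ht, hst⟩ := exists_lt_of_lt_csSup ⟨r₀, hr₀S⟩ hs
    exact hlower t ht s hst.le
  obtain ⟨δ, hδ, hRδ⟩ := hX.exists_isCompact_closedBall_add a (hr₀.le.trans hR0) hR
  linarith [le_csSup hbdd hRδ]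

end HopfRinow

section Lusin

variable {α X : Type*} [TopologicalSpace α] [T2Space α] [MeasurableSpace α]
  [OpensMeasurableSpace α] {μ : Measure α} [μ.InnerRegularCompactLTTop] {Ω : Set α}

theorem MeasurableSet.exists_isCompact_inter_eq_isOpen_inter (hΩ : MeasurableSet Ω)
    (hμΩ : μ Ω ≠ ∞) {A : Set α} (hA : MeasurableSet A) {ε : ℝ≥0∞} (hε : ε ≠ 0) :
    ∃ L, IsCompact L ∧ μ (Ω \ L) < ε ∧ ∃ V, IsOpen V ∧ A ∩ L = V ∩ L := by
  have hε2 : ε / 2 ≠ 0 := ENNReal.div_ne_zero.2 ⟨hε, ENNReal.ofNat_ne_top⟩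
  obtain ⟨K₁, hK₁, hK₁c, hμK₁⟩ := (hΩ.inter hA).exists_isCompact_sdiff_lt
    (measure_ne_top_of_subset inter_subset_left hμΩ) hε2
  obtain ⟨K₂, hK₂, hK₂c, hμK₂⟩ := (hΩ.diff hA).exists_isCompact_sdiff_lt
    (measure_ne_top_of_subset sdiff_subset hμΩ) hε2
  refine ⟨K₁ ∪ K₂, hK₁c.union hK₂c, ?_, K₂ᶜ, hK₂c.isClosed.isOpen_compl, ?_⟩
  · calc μ (Ω \ (K₁ ∪ K₂)) ≤ μ ((Ω ∩ A) \ K₁ ∪ (Ω \ A) \ K₂) := measure_mono fun x hx => by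
          by_cases hxA : x ∈ A
          exacts [Or.inl ⟨⟨hx.1, hxA⟩, fun h => hx.2 (Or.inl h)⟩,
            Or.inr ⟨⟨hx.1, hxA⟩, fun h => hx.2 (Or.inr h)⟩]
      _ ≤ μ ((Ω ∩ A) \ K₁) + μ ((Ω \ A) \ K₂) := measure_union_le _ _
      _ < ε / 2 + ε / 2 := ENNReal.add_lt_add hμK₁ hμK₂
      _ = ε := ENNReal.add_halves ε
  · ext x
    have h₁ := @hK₁ x
    have h₂ := @hK₂ x
    simp only [mem_inter_iff, Set.mem_sdiff, mem_union, mem_compl_iff] at h₁ h₂ ⊢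
    tauto

variable [TopologicalSpace X] [MeasurableSpace X] [OpensMeasurableSpace X]
  [SecondCountableTopology X]

theorem Measurable.exists_isCompact_continuousOn {g : α → X} (hg : Measurable g)
    (hΩ : MeasurableSet Ω) (hμΩ : μ Ω ≠ ∞) {ε : ℝ≥0∞} (hε : ε ≠ 0) :
    ∃ K ⊆ Ω, IsCompact K ∧ ContinuousOn g K ∧ μ (Ω \ K) < ε := by
  have hε2 : ε / 2 ≠ 0 := ENNReal.div_ne_zero.2 ⟨hε, ENNReal.ofNat_ne_top⟩
  obtain ⟨b, hbc, -, hb⟩ := TopologicalSpace.exists_countable_basis X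
  have := hbc.to_subtype
  obtain ⟨ε', hε'0, hε'⟩ := ENNReal.exists_pos_sum_of_countable' hε2 b
  choose L hLc hμL V hVo hV using fun U : b =>
    hΩ.exists_isCompact_inter_eq_isOpen_inter hμΩ (hg (hb.isOpen U.2).measurableSet)
      (hε'0 U).ne'
  obtain ⟨K₀, hK₀Ω, hK₀c, hμK₀⟩ := hΩ.exists_isCompact_sdiff_lt hμΩ hε2
  set K := K₀ ∩ ⋂ U, L U
  refine ⟨K, inter_subset_left.trans hK₀Ω,
    hK₀c.inter_right (isClosed_iInter fun U => (hLc U).isClosed), ?_, ?_⟩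
  · refine hb.continuousOn_iff.2 fun U hU => ⟨V ⟨U, hU⟩, hVo _, ?_⟩
    have hKL : K ⊆ L ⟨U, hU⟩ := inter_subset_right.trans (iInter_subset _ _)
    calc g ⁻¹' U ∩ K = g ⁻¹' U ∩ L ⟨U, hU⟩ ∩ K := by rw [inter_assoc, inter_eq_right.2 hKL]
      _ = V ⟨U, hU⟩ ∩ K := by rw [hV ⟨U, hU⟩, inter_assoc, inter_eq_right.2 hKL]
  · calc μ (Ω \ K) ≤ μ ((Ω \ K₀) ∪ ⋃ U, Ω \ L U) := by
          rw [sdiff_inter, sdiff_iInter]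
      _ ≤ μ (Ω \ K₀) + ∑' U, μ (Ω \ L U) :=
          (measure_union_le _ _).trans (add_le_add le_rfl (measure_iUnion_le _))
      _ < ε / 2 + ε / 2 :=
          ENNReal.add_lt_add hμK₀ ((ENNReal.tsum_le_tsum fun U => (hμL U).le).trans_lt hε')
      _ = ε := ENNReal.add_halves ε

end Lusin

section ChangeOfVariables

variable {E : Type*} [NormedAddCommGroup E] [NormedSpace ℝ E] [FiniteDimensional ℝ E]
  [MeasurableSpace E] [BorelSpace E] (μ : Measure E) [μ.IsAddHaarMeasure]

theorem map_restrict_le_smul_restrict_image {s : Set E} (hs : MeasurableSet s) {f : E → E}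
    {f' : E → E →L[ℝ] E} (hf' : ∀ x ∈ s, HasFDerivWithinAt f (f' x) s x) (hf : InjOn f s)
    {C : ℝ} (hdet : ∀ x ∈ s, 1 ≤ C * |(f' x).det|) :
    (μ.restrict s).map f ≤ ENNReal.ofReal C • μ.restrict (f '' s) := by
  set ν := (μ.restrict s).withDensity fun x => ENNReal.ofReal |(f' x).det|
  have hfm : AEMeasurable f (μ.restrict s) :=
    ContinuousOn.aemeasurable (fun x hx => (hf' x hx).differentiableWithinAt.continuousWithinAt) hs
  have hle : μ.restrict s ≤ ENNReal.ofReal C • ν := by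
    rw [← withDensity_smul' _ _ ENNReal.ofReal_ne_top]
    conv_lhs => rw [← withDensity_one (μ := μ.restrict s)]
    refine withDensity_mono ((ae_restrict_iff' hs).2 (Eventually.of_forall fun x hx => ?_))
    rw [Pi.one_apply, Pi.smul_apply, smul_eq_mul, ← ENNReal.ofReal_mul', ← ENNReal.ofReal_one]
    · exact ENNReal.ofReal_le_ofReal (hdet x hx)
    · exact abs_nonneg _
  calc (μ.restrict s).map f ≤ (ENNReal.ofReal C • ν).map f :=
        Measure.map_mono_of_aemeasurable hle
          (hfm.mono_ac ((withDensity_absolutelyContinuous _ _).smul_left _))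
    _ = ENNReal.ofReal C • μ.restrict (f '' s) := by
        rw [Measure.map_smul,
          map_withDensity_abs_det_fderiv_eq_addHaar μ hs.nullMeasurableSet hf' hf]

end ChangeOfVariables

section Admissible

variable {n : ℕ} {Ω : Set (EuclideanSpace ℝ (Fin n))}
  {φ : EuclideanSpace ℝ (Fin n) → EuclideanSpace ℝ (Fin n)}

theorem IsAdmissibleDiffeo.hasFDerivAt (hΩ : IsOpen Ω) (hφ : IsAdmissibleDiffeo Ω φ)
    {x : EuclideanSpace ℝ (Fin n)} (hx : x ∈ Ω) : HasFDerivAt φ (fderiv ℝ φ x) x :=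
  ((hφ.2.1.differentiableOn one_ne_zero).differentiableAt (hΩ.mem_nhds hx)).hasFDerivAt

theorem IsAdmissibleDiffeo.det_fderiv_ne_zero (hΩ : IsOpen Ω) (hφ : IsAdmissibleDiffeo Ω φ)
    {x : EuclideanSpace ℝ (Fin n)} (hx : x ∈ Ω) : (fderiv ℝ φ x).det ≠ 0 := by
  have hφx := hφ.hasFDerivAt hΩ hx
  obtain ⟨hbij, -, ψ, hψφ, -, hψ⟩ := hφ
  have hψx : HasFDerivAt ψ (fderiv ℝ ψ (φ x)) (φ x) :=
    ((hψ.differentiableOn one_ne_zero).differentiableAt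
      (hΩ.mem_nhds (hbij.mapsTo hx))).hasFDerivAt
  have hcomp : (fderiv ℝ ψ (φ x)).comp (fderiv ℝ φ x) = ContinuousLinearMap.id ℝ _ :=
    (hψx.comp x hφx).unique <| (hasFDerivAt_id x).congr_of_eventuallyEq
      (eventually_of_mem (hΩ.mem_nhds hx) hψφ)
  refine right_ne_zero_of_mul_eq_one (a := (fderiv ℝ ψ (φ x)).det) ?_
  exact (LinearMap.det_comp _ _).symm.trans
    ((congrArg ContinuousLinearMap.det hcomp).trans LinearMap.det_id)

theorem IsAdmissibleDiffeo.aemeasurable (hΩ : IsOpen Ω) (hφ : IsAdmissibleDiffeo Ω φ) :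
    AEMeasurable φ (volume.restrict Ω) :=
  hφ.2.1.continuousOn.aemeasurable hΩ.measurableSet

theorem IsAdmissibleDiffeo.map_volume_restrict_le (hΩ : IsOpen Ω) (hφ : IsAdmissibleDiffeo Ω φ)
    {C : ℝ} (hdet : ∀ x ∈ Ω, |(fderiv ℝ φ x).det|⁻¹ ≤ C) :
    (volume.restrict Ω).map φ ≤ ENNReal.ofReal C • volume.restrict Ω := by
  have h := map_restrict_le_smul_restrict_image volume hΩ.measurableSet
    (fun x hx => (hφ.hasFDerivAt hΩ hx).hasFDerivWithinAt) hφ.1.injOn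
    (fun x hx => (inv_le_iff_one_le_mul₀ (abs_pos.2 (hφ.det_fderiv_ne_zero hΩ hx))).1 (hdet x hx))
  rwa [hφ.1.image_eq] at h

end Admissible

theorem ENNReal.tendsto_nhds_zero_of_eventually_le_mul {ι : Type*} {l : Filter ι} {u : ι → ℝ≥0∞}
    {C : ℝ≥0∞} (hC : C ≠ ∞) (h : ∀ η > 0, ∀ᶠ i in l, u i ≤ C * η) :
    Tendsto u l (𝓝 0) := by
  refine ENNReal.tendsto_nhds_zero.2 fun ε hε => ?_
  filter_upwards [h (ε / C) (ENNReal.div_pos_iff.2 ⟨hε.ne', hC⟩)] with i hi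
  exact hi.trans ENNReal.mul_div_le

theorem edist_rpow_le_mul_add {X : Type*} [PseudoEMetricSpace X] {p : ℝ} (hp : 1 ≤ p) (x y z : X) :
    edist x z ^ p ≤ 2 ^ (p - 1) * (edist x y ^ p + edist y z ^ p) :=
  (ENNReal.rpow_le_rpow (edist_triangle x y z) (by linarith)).trans
    (ENNReal.rpow_add_le_mul_rpow_add_rpow _ _ hp)

theorem lintegral_edist_rpow_le_mul_add {α X : Type*} [MeasurableSpace α] {μ : Measure α}
    [PseudoEMetricSpace X] [MeasurableSpace X] [OpensMeasurableSpace X]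
    [SecondCountableTopology X] {p : ℝ} (hp : 1 ≤ p) {u v w : α → X}
    (hu : AEMeasurable u μ) (hv : AEMeasurable v μ) :
    ∫⁻ x, edist (u x) (w x) ^ p ∂μ ≤
      2 ^ (p - 1) * (∫⁻ x, edist (u x) (v x) ^ p ∂μ + ∫⁻ x, edist (v x) (w x) ^ p ∂μ) := by
  rw [← lintegral_add_left' ((hu.edist hv).pow_const p), ← lintegral_const_mul' _ _ (by simp)]
  exact lintegral_mono fun x => edist_rpow_le_mul_add hp _ _ _

theorem lintegral_comp_le_of_map_le {α : Type*} [MeasurableSpace α] {ν ν' : Measure α}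
    {φ : α → α} (hφ : AEMeasurable φ ν) {c : ℝ≥0∞} (hmap : ν.map φ ≤ c • ν') {h : α → ℝ≥0∞}
    (hh : Measurable h) : ∫⁻ x, h (φ x) ∂ν ≤ c * ∫⁻ x, h x ∂ν' :=
  calc ∫⁻ x, h (φ x) ∂ν = ∫⁻ y, h y ∂ν.map φ := (lintegral_map' hh.aemeasurable hφ).symm
    _ ≤ ∫⁻ y, h y ∂(c • ν') := lintegral_mono' hmap le_rfl
    _ = c * ∫⁻ x, h x ∂ν' := lintegral_smul_measure _ _

theorem exists_isBounded_range_lintegral_edist_rpow_lt {α X : Type*}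
    [MeasurableSpace α] {μ : Measure α} [PseudoMetricSpace X] [MeasurableSpace X]
    [OpensMeasurableSpace X] {f : α → X} (hf : Measurable f) (a : X) {p : ℝ} (hp : 0 < p)
    (hfa : ∫⁻ x, edist (f x) a ^ p ∂μ ≠ ∞) {ε : ℝ≥0∞} (hε : 0 < ε) :
    ∃ g : α → X, Measurable g ∧ Bornology.IsBounded (range g) ∧
      ∫⁻ x, edist (f x) (g x) ^ p ∂μ < ε := by
  set g : ℕ → α → X := fun m x => if dist (f x) a ≤ m then f x else a
  set F : α → ℝ≥0∞ := fun x => edist (f x) a ^ p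
  set S : ℕ → Set α := fun m => {x | (m : ℝ) < dist (f x) a}
  have hdist : Measurable fun x => dist (f x) a :=
    (continuous_id.dist continuous_const).measurable.comp hf
  have hfg : ∀ m x, edist (f x) (g m x) ^ p = (S m).indicator F x := by
    intro m x
    by_cases h : dist (f x) a ≤ m
    · rw [indicator_of_notMem (show x ∉ S m from not_lt.2 h)]
      simp [g, h, hp]
    · rw [indicator_of_mem (show x ∈ S m from not_le.1 h)]
      simp [g, h, F]
  have hlim : Tendsto (fun m => ∫⁻ x, edist (f x) (g m x) ^ p ∂μ) atTop (𝓝 0) := by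
    simp_rw [hfg]
    simpa using tendsto_lintegral_of_dominated_convergence F
      (fun m => (((continuous_id.edist continuous_const).measurable.comp hf).pow_const p).indicator
        (measurableSet_lt measurable_const hdist))
      (fun m => ae_of_all _ (indicator_le_self _ _)) hfa (ae_of_all _ fun x =>
        tendsto_atTop_of_eventually_const (i₀ := ⌈dist (f x) a⌉₊) fun m hm =>
          indicator_of_notMem (show x ∉ S m from
            not_lt.2 ((Nat.le_ceil _).trans (Nat.cast_le.2 hm))) _)
  obtain ⟨m, hm⟩ := (hlim.eventually (eventually_lt_nhds hε)).exists
  refine ⟨g m, ?_, (Metric.isBounded_closedBall (x := a) (r := m)).subset ?_, hm⟩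
  · exact Measurable.ite (measurableSet_le hdist measurable_const) hf measurable_const
  · rintro _ ⟨x, rfl⟩
    by_cases h : dist (f x) a ≤ m <;> simp [g, h]

section Composition

variable {α X ι : Type*} [MetricSpace α] [MeasurableSpace α] [BorelSpace α] {μ : Measure α}
  [μ.InnerRegularCompactLTTop] [PseudoMetricSpace X] [MeasurableSpace X] [BorelSpace X]
  [SecondCountableTopology X] {Ω : Set α} {l : Filter ι} {φ : ι → α → α} {φ₀ : α → α}
  {c : ℝ≥0∞} {p : ℝ}

theorem tendsto_lintegral_edist_comp_rpow_of_isBounded {g : α → X} (hg : Measurable g)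
    (hgb : Bornology.IsBounded (range g)) (hp : 0 < p) (hΩ : MeasurableSet Ω)
    (hμΩ : μ Ω ≠ ∞) (hc : c ≠ ∞) (hφm : ∀ j, AEMeasurable (φ j) (μ.restrict Ω))
    (hφ : ∀ j, (μ.restrict Ω).map (φ j) ≤ c • μ.restrict Ω)
    (hφ₀m : AEMeasurable φ₀ (μ.restrict Ω)) (hφ₀ : (μ.restrict Ω).map φ₀ ≤ c • μ.restrict Ω)
    (hconv : TendstoUniformlyOn φ φ₀ l Ω) :
    Tendsto (fun j => ∫⁻ x in Ω, edist (g (φ j x)) (g (φ₀ x)) ^ p ∂μ) l (𝓝 0) := by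
  set D := Metric.ediam (range g) ^ p
  have hD : D ≠ ∞ :=
    ENNReal.rpow_ne_top_of_nonneg hp.le (Metric.isBounded_iff_ediam_ne_top.1 hgb)
  refine ENNReal.tendsto_nhds_zero_of_eventually_le_mul (C := μ Ω + D * (c + c))
    (by finiteness) fun η hη => ?_
  obtain ⟨K, -, hKc, hgK, hμK⟩ := hg.exists_isCompact_continuousOn hΩ hμΩ hη.ne'
  obtain ⟨ρ, hρ, hgρ⟩ := EMetric.uniformContinuousOn_iff.1
    (hKc.uniformContinuousOn_of_continuous hgK) (η ^ p⁻¹)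
    (ENNReal.rpow_pos_of_nonneg hη (by positivity))
  set χ : α → ℝ≥0∞ := Kᶜ.indicator 1
  have hχ : Measurable χ := measurable_one.indicator hKc.isClosed.measurableSet.compl
  have hχΩ : ∫⁻ x in Ω, χ x ∂μ ≤ η := by
    rw [lintegral_indicator_one hKc.isClosed.measurableSet.compl,
      Measure.restrict_apply hKc.isClosed.measurableSet.compl, ← sdiff_eq_compl_inter]
    exact hμK.le
  filter_upwards [EMetric.tendstoUniformlyOn_iff.1 hconv ρ hρ] with j hj
  have hpt : ∀ x ∈ Ω, edist (g (φ j x)) (g (φ₀ x)) ^ p ≤ η + D * (χ (φ j x) + χ (φ₀ x)) := by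
    intro x hx
    by_cases hK : φ j x ∈ K ∧ φ₀ x ∈ K
    · refine le_add_right ((ENNReal.rpow_lt_rpow ?_ hp).le.trans_eq
        (ENNReal.rpow_inv_rpow hp.ne' η))
      exact hgρ hK.1 hK.2 (by rw [edist_comm]; exact hj x hx)
    · refine le_add_left (le_mul_of_le_of_one_le ?_ ?_)
      · exact ENNReal.rpow_le_rpow (Metric.edist_le_ediam_of_mem (mem_range_self _)
          (mem_range_self _)) hp.le
      · rcases not_and_or.1 hK with h | h <;> simp [χ, h]
  calc ∫⁻ x in Ω, edist (g (φ j x)) (g (φ₀ x)) ^ p ∂μ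
      ≤ ∫⁻ x in Ω, η + D * (χ (φ j x) + χ (φ₀ x)) ∂μ := setLIntegral_mono' hΩ hpt
    _ = η * μ Ω + D * (∫⁻ x in Ω, χ (φ j x) ∂μ + ∫⁻ x in Ω, χ (φ₀ x) ∂μ) := by
      rw [lintegral_add_left measurable_const, setLIntegral_const, lintegral_const_mul' _ _ hD,
        lintegral_add_left' (f := fun x => χ (φ j x)) (hχ.comp_aemeasurable (hφm j))]
    _ ≤ η * μ Ω + D * (c * η + c * η) := by
      gcongr
      · exact (lintegral_comp_le_of_map_le (hφm j) (hφ j) hχ).trans (by gcongr)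
      · exact (lintegral_comp_le_of_map_le hφ₀m hφ₀ hχ).trans (by gcongr)
    _ = (μ Ω + D * (c + c)) * η := by ring

theorem tendsto_lintegral_edist_comp_rpow {f : α → X} (hf : Measurable f) (a : X)
    (hfa : ∫⁻ x in Ω, edist (f x) a ^ p ∂μ ≠ ∞) (hp : 1 ≤ p) (hΩ : MeasurableSet Ω)
    (hμΩ : μ Ω ≠ ∞) (hc : c ≠ ∞) (hφm : ∀ j, AEMeasurable (φ j) (μ.restrict Ω))
    (hφ : ∀ j, (μ.restrict Ω).map (φ j) ≤ c • μ.restrict Ω)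
    (hφ₀m : AEMeasurable φ₀ (μ.restrict Ω)) (hφ₀ : (μ.restrict Ω).map φ₀ ≤ c • μ.restrict Ω)
    (hconv : TendstoUniformlyOn φ φ₀ l Ω) :
    Tendsto (fun j => ∫⁻ x in Ω, edist (f (φ j x)) (f (φ₀ x)) ^ p ∂μ) l (𝓝 0) := by
  have hp0 : 0 < p := zero_lt_one.trans_le hp
  refine ENNReal.tendsto_nhds_zero_of_eventually_le_mul
    (C := 2 ^ (p - 1) * (c + 2 ^ (p - 1) * (1 + c))) (by finiteness) fun η hη => ?_
  obtain ⟨g, hgm, hgb, hfg⟩ := exists_isBounded_range_lintegral_edist_rpow_lt hf a hp0 hfa hη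
  have hfg_comp : ∀ ψ : α → α, AEMeasurable ψ (μ.restrict Ω) →
      (μ.restrict Ω).map ψ ≤ c • μ.restrict Ω →
      ∫⁻ x in Ω, edist (f (ψ x)) (g (ψ x)) ^ p ∂μ ≤ c * η := fun ψ hψm hψ =>
    (lintegral_comp_le_of_map_le hψm hψ ((hf.edist hgm).pow_const p)).trans (by gcongr)
  filter_upwards [(tendsto_lintegral_edist_comp_rpow_of_isBounded hgm hgb hp0 hΩ hμΩ hc hφm hφ
    hφ₀m hφ₀ hconv).eventually (eventually_le_nhds hη)] with j hj
  calc ∫⁻ x in Ω, edist (f (φ j x)) (f (φ₀ x)) ^ p ∂μ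
      ≤ 2 ^ (p - 1) * (∫⁻ x in Ω, edist (f (φ j x)) (g (φ j x)) ^ p ∂μ +
          ∫⁻ x in Ω, edist (g (φ j x)) (f (φ₀ x)) ^ p ∂μ) :=
        lintegral_edist_rpow_le_mul_add hp (hf.comp_aemeasurable (hφm j))
          (hgm.comp_aemeasurable (hφm j))
    _ ≤ 2 ^ (p - 1) * (c * η + 2 ^ (p - 1) * (∫⁻ x in Ω, edist (g (φ j x)) (g (φ₀ x)) ^ p ∂μ +
          ∫⁻ x in Ω, edist (g (φ₀ x)) (f (φ₀ x)) ^ p ∂μ)) := by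
        gcongr
        · exact hfg_comp _ (hφm j) (hφ j)
        · exact lintegral_edist_rpow_le_mul_add hp (hgm.comp_aemeasurable (hφm j))
            (hgm.comp_aemeasurable hφ₀m)
    _ ≤ 2 ^ (p - 1) * (c * η + 2 ^ (p - 1) * (η + c * η)) := by
        simp_rw [edist_comm (g (φ₀ _))]
        gcongr
        exact hfg_comp _ hφ₀m hφ₀
    _ = 2 ^ (p - 1) * (c + 2 ^ (p - 1) * (1 + c)) * η := by ring

end Composition

theorem comp_converges_in_Lp_of_uniform_convergence_general
    {n : ℕ}
    (Ω : Set (EuclideanSpace ℝ (Fin n))) (hΩo : IsOpen Ω) (hΩb : Bornology.IsBounded Ω)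
    {X : Type*} [MetricSpace X] [CompleteSpace X] [LocallyCompactSpace X]
    [MeasurableSpace X] [BorelSpace X]
    (hgeo : ∀ x y : X, ∃ γ : ℝ → X, γ 0 = x ∧ γ 1 = y ∧
      ∀ s ∈ Icc (0:ℝ) 1, ∀ t ∈ Icc (0:ℝ) 1, dist (γ s) (γ t) = |s - t| * dist x y)
    (p : ℝ) (hp : 1 ≤ p)
    (f : EuclideanSpace ℝ (Fin n) → X) (hf : Measurable f)
    (a : X) (hfa : ∫⁻ ω in Ω, ENNReal.ofReal (dist (f ω) a ^ p) < ⊤)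
    (φ : ℕ → EuclideanSpace ℝ (Fin n) → EuclideanSpace ℝ (Fin n))
    (φhat : EuclideanSpace ℝ (Fin n) → EuclideanSpace ℝ (Fin n))
    (hφ : ∀ j, IsAdmissibleDiffeo Ω (φ j)) (hφhat : IsAdmissibleDiffeo Ω φhat)
    (hconv : TendstoUniformlyOn φ φhat atTop Ω)
    (C : ℝ)
    (hdet : ∀ j, ∀ x ∈ Ω, |(fderiv ℝ (φ j) x).det|⁻¹ ≤ C)
    (hdethat : ∀ x ∈ Ω, |(fderiv ℝ φhat x).det|⁻¹ ≤ C) :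
    Tendsto (fun j => ∫⁻ x in Ω, ENNReal.ofReal (dist (f (φ j x)) (f (φhat x)) ^ p))
      atTop (nhds 0) := by
  have : ProperSpace X := IsGeodesicSpace.properSpace hgeo
  have hofReal : ∀ x y : X, ENNReal.ofReal (dist x y ^ p) = edist x y ^ p := fun x y => by
    rw [edist_dist, ENNReal.ofReal_rpow_of_nonneg dist_nonneg (by linarith)]
  simp_rw [hofReal] at hfa ⊢
  exact tendsto_lintegral_edist_comp_rpow hf a hfa.ne hp hΩo.measurableSet
    hΩb.measure_lt_top.ne ENNReal.ofReal_ne_top (fun j => (hφ j).aemeasurable hΩo)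
    (fun j => (hφ j).map_volume_restrict_le hΩo (hdet j)) (hφhat.aemeasurable hΩo)
    (hφhat.map_volume_restrict_le hΩo hdethat) hconv

/-- If `f ∈ L^p(Ω, X)` for a locally compact Hadamard space `X`, and
admissible diffeomorphisms `φ⁽ʲ⁾` converge uniformly on `Ω` to an admissible
diffeomorphism `φ̂`, with `|det Dφ⁽ʲ⁾|⁻¹ ≤ C` and `|det Dφ̂|⁻¹ ≤ C`, then
`∫_Ω d(f∘φ⁽ʲ⁾, f∘φ̂)^p → 0`. -/
theorem comp_converges_in_Lp_of_uniform_convergence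
    {n : ℕ} (hn : 1 ≤ n)
    (Ω : Set (EuclideanSpace ℝ (Fin n))) (hΩo : IsOpen Ω) (hΩb : Bornology.IsBounded Ω)
    {X : Type*} [MetricSpace X] [CompleteSpace X] [LocallyCompactSpace X]
    [MeasurableSpace X] [BorelSpace X]
    (hgeo : ∀ x y : X, ∃ γ : ℝ → X, γ 0 = x ∧ γ 1 = y ∧
      ∀ s ∈ Icc (0:ℝ) 1, ∀ t ∈ Icc (0:ℝ) 1, dist (γ s) (γ t) = |s - t| * dist x y)
    (h4 : ∀ x y v w : X, dist x v ^ 2 + dist y w ^ 2 ≤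
      dist x w ^ 2 + dist y v ^ 2 + 2 * dist x y * dist v w)
    (p : ℝ) (hp : 1 ≤ p)
    (f : EuclideanSpace ℝ (Fin n) → X) (hf : Measurable f)
    (a : X) (hfa : ∫⁻ ω in Ω, ENNReal.ofReal (dist (f ω) a ^ p) < ⊤)
    (φ : ℕ → EuclideanSpace ℝ (Fin n) → EuclideanSpace ℝ (Fin n))
    (φhat : EuclideanSpace ℝ (Fin n) → EuclideanSpace ℝ (Fin n))
    (hφ : ∀ j, IsAdmissibleDiffeo Ω (φ j)) (hφhat : IsAdmissibleDiffeo Ω φhat)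
    (hconv : TendstoUniformlyOn φ φhat atTop Ω)
    (C : ℝ) (hC : 0 < C)
    (hdet : ∀ j, ∀ x ∈ Ω, |(fderiv ℝ (φ j) x).det|⁻¹ ≤ C)
    (hdethat : ∀ x ∈ Ω, |(fderiv ℝ φhat x).det|⁻¹ ≤ C) :
    Tendsto (fun j => ∫⁻ x in Ω, ENNReal.ofReal (dist (f (φ j x)) (f (φhat x)) ^ p))
      atTop (nhds 0) :=
  comp_converges_in_Lp_of_uniform_convergence_general Ω hΩo hΩb hgeo p hp f hf a hfa φ φhat hφ hφhat
    hconv C hdet hdethat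
end

section
/- Let (X,d) be a Hadamard space, let K ≥ 1 be an integer, let w₁,…,w_K > 0 and let a, b ∈ X. If G₀,…,G_K ∈ X satisfy G₀ = a, G_K = b and ∑_{k=1}^K w_k · d(G_k, G_{k−1})² = d(a,b)² / (∑_{i=1}^K w_i⁻¹), then there exists a geodesic γ : [0,1] → X from a to b such that G_k = γ(t_k) for every k = 0,…,K, where t_k := (∑_{i=1}^k w_i⁻¹)/(∑_{i=1}^K w_i⁻¹). -/
/-!
By the triangle inequality and Cauchy–Schwarz, every chain `G₀ = a, …, G_K = b` has weighted
energy `∑ wₖ d(Gₖ, Gₖ₋₁)² ≥ d(a,b)² / ∑ wᵢ⁻¹`, with equality only if each step has length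
`d(a,b) / (wₖ ∑ wᵢ⁻¹)`. Summing the steps puts `G_k` within `t_k·d(a,b)` of `a` and within
`(1 - t_k)·d(a,b)` of `b`. The four-point inequality, applied to `G_k, b, γ(t_k), a`, shows that
at most one point has both properties, and `γ(t_k)` has them.
-/

open Finset

/-- The parameter values `t_k = (∑_{i=1}^k w_i⁻¹) / (∑_{i=1}^K w_i⁻¹)`. -/
noncomputable def geodParam (w : ℕ → ℝ) (K k : ℕ) : ℝ :=
  (∑ i ∈ Finset.Icc 1 k, (w i)⁻¹) / (∑ i ∈ Finset.Icc 1 K, (w i)⁻¹)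

theorem dist_le_sum_Ioc_dist_pred {X : Type*} [PseudoMetricSpace X] (f : ℕ → X) {m n : ℕ}
    (hmn : m ≤ n) : dist (f m) (f n) ≤ ∑ i ∈ Ioc m n, dist (f i) (f (i - 1)) := by
  induction n, hmn using Nat.le_induction with
  | base => simp
  | succ n hmn ih =>
    rw [sum_Ioc_succ_top hmn, Nat.add_sub_cancel, dist_comm (f (n + 1))]
    exact (dist_triangle _ _ _).trans (add_le_add_left ih _)

/-- Equality case of Cauchy–Schwarz `(∑ dᵢ)² ≤ (∑ wᵢ dᵢ²)(∑ wᵢ⁻¹)`. -/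
theorem eq_div_sum_inv_mul_inv_of_sum_mul_sq_le {ι : Type*} {s : Finset ι} {w d : ι → ℝ}
    {L : ℝ} (hw : ∀ i ∈ s, 0 < w i) (hL : 0 ≤ L) (hLd : L ≤ ∑ i ∈ s, d i)
    (henergy : ∑ i ∈ s, w i * d i ^ 2 ≤ L ^ 2 / ∑ i ∈ s, (w i)⁻¹) :
    ∀ i ∈ s, d i = L / (∑ j ∈ s, (w j)⁻¹) * (w i)⁻¹ := by
  set S := ∑ j ∈ s, (w j)⁻¹
  set c := L / S
  have hc : 0 ≤ c := div_nonneg hL (sum_nonneg fun i hi => (inv_pos.2 (hw i hi)).le)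
  have hexpand : ∑ i ∈ s, w i * (d i - c * (w i)⁻¹) ^ 2
      = ∑ i ∈ s, w i * d i ^ 2 - 2 * c * ∑ i ∈ s, d i + c ^ 2 * S := by
    rw [mul_sum, mul_sum, ← sum_sub_distrib, ← sum_add_distrib]
    refine sum_congr rfl fun i hi => ?_
    field_simp [(hw i hi).ne']
    ring
  have hcS : c ^ 2 * S = L ^ 2 / S := by
    rcases eq_or_ne S 0 with hS | hS
    · simp [c, hS]
    · simp only [c]; field_simp
  have hzero : ∑ i ∈ s, w i * (d i - c * (w i)⁻¹) ^ 2 = 0 := by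
    refine le_antisymm ?_ (sum_nonneg fun i hi => mul_nonneg (hw i hi).le (sq_nonneg _))
    have hL2 : L ^ 2 / S = c * L := by ring
    rw [hexpand, hcS]
    linarith [mul_le_mul_of_nonneg_left hLd hc]
  intro i hi
  have := (sum_eq_zero_iff_of_nonneg fun j hj => mul_nonneg (hw j hj).le (sq_nonneg _)).1 hzero i hi
  rw [mul_eq_zero, or_iff_right (hw i hi).ne', sq_eq_zero_iff, sub_eq_zero] at this
  exact this

def FourPointInequality (X : Type*) [PseudoMetricSpace X] : Prop :=
  ∀ x y v w : X, dist x v ^ 2 + dist y w ^ 2 ≤ dist x w ^ 2 + dist y v ^ 2 + 2 * dist x y * dist v w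

theorem FourPointInequality.eq_of_dist_le {X : Type*} [MetricSpace X]
    (h4 : FourPointInequality X) {a b p q : X} {t : ℝ}
    (hpa : dist p a ≤ t * dist a b) (hpb : dist p b ≤ (1 - t) * dist a b)
    (hqa : dist q a ≤ t * dist a b) (hqb : dist q b ≤ (1 - t) * dist a b) : p = q := by
  have hpa2 : dist p a ^ 2 ≤ (t * dist a b) ^ 2 := pow_le_pow_left₀ dist_nonneg hpa 2
  have hqb2 : dist b q ^ 2 ≤ ((1 - t) * dist a b) ^ 2 :=
    pow_le_pow_left₀ dist_nonneg (dist_comm b q ▸ hqb) 2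
  have hprod : dist p b * dist q a ≤ (1 - t) * dist a b * (t * dist a b) :=
    mul_le_mul hpb hqa dist_nonneg (dist_nonneg.trans hpb)
  have h := h4 p b q a
  rw [dist_comm b a] at h
  have : dist p q ^ 2 ≤ 0 := by nlinarith
  exact dist_eq_zero.1 (pow_eq_zero_iff two_ne_zero |>.1 (this.antisymm (sq_nonneg _)))

theorem geodParam_mem_Icc {w : ℕ → ℝ} {K k : ℕ} (hw : ∀ i ∈ Icc 1 K, 0 < w i) (hk : k ≤ K) :
    geodParam w K k ∈ Set.Icc 0 1 := by
  have hsub : Icc 1 k ⊆ Icc 1 K := Icc_subset_Icc_right hk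
  have hnonneg : ∀ i ∈ Icc 1 K, 0 ≤ (w i)⁻¹ := fun i hi => (inv_pos.2 (hw i hi)).le
  exact ⟨div_nonneg (sum_nonneg fun i hi => hnonneg i (hsub hi)) (sum_nonneg hnonneg),
    div_le_one_of_le₀ (sum_le_sum_of_subset_of_nonneg hsub fun i hi _ => hnonneg i hi)
      (sum_nonneg hnonneg)⟩

theorem dist_le_mul_sum_Ioc_of_dist_pred_eq {X : Type*} [PseudoMetricSpace X] {f : ℕ → X}
    {w : ℕ → ℝ} {c : ℝ} {K m n : ℕ}
    (hstep : ∀ i ∈ Ioc 0 K, dist (f i) (f (i - 1)) = c * (w i)⁻¹) (hmn : m ≤ n) (hnK : n ≤ K) :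
    dist (f m) (f n) ≤ c * ∑ i ∈ Ioc m n, (w i)⁻¹ :=
  (dist_le_sum_Ioc_dist_pred f hmn).trans_eq <| by
    rw [mul_sum]
    exact sum_congr rfl fun i hi => hstep i (Ioc_subset_Ioc m.zero_le hnK hi)

theorem dist_le_geodParam_mul_of_energy_le {X : Type*} [PseudoMetricSpace X] {K : ℕ}
    (hK : 1 ≤ K) {w : ℕ → ℝ} (hw : ∀ k ∈ Icc 1 K, 0 < w k) {a b : X} {G : ℕ → X}
    (hG0 : G 0 = a) (hGK : G K = b)
    (henergy : ∑ k ∈ Icc 1 K, w k * dist (G k) (G (k - 1)) ^ 2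
      ≤ dist a b ^ 2 / ∑ i ∈ Icc 1 K, (w i)⁻¹) {k : ℕ} (hk : k ≤ K) :
    dist (G k) a ≤ geodParam w K k * dist a b ∧
      dist (G k) b ≤ (1 - geodParam w K k) * dist a b := by
  have hIoc : ∀ n, Icc 1 n = Ioc 0 n := fun n => Icc_add_one_left_eq_Ioc 0 n
  rw [geodParam, hIoc, hIoc]
  rw [hIoc] at hw henergy
  set S := ∑ i ∈ Ioc 0 K, (w i)⁻¹
  have hS : 0 < S := sum_pos (fun i hi => inv_pos.2 (hw i hi)) ⟨1, by simp [hK]⟩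
  have hstep := eq_div_sum_inv_mul_inv_of_sum_mul_sq_le hw dist_nonneg
    (by simpa [hG0, hGK] using dist_le_sum_Ioc_dist_pred G K.zero_le) henergy
  have hsplit : S = ∑ i ∈ Ioc 0 k, (w i)⁻¹ + ∑ i ∈ Ioc k K, (w i)⁻¹ :=
    (sum_Ioc_consecutive _ k.zero_le hk).symm
  constructor
  · calc dist (G k) a = dist (G 0) (G k) := by rw [hG0, dist_comm]
      _ ≤ dist a b / S * ∑ i ∈ Ioc 0 k, (w i)⁻¹ :=
        dist_le_mul_sum_Ioc_of_dist_pred_eq hstep k.zero_le hk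
      _ = (∑ i ∈ Ioc 0 k, (w i)⁻¹) / S * dist a b := by ring
  · calc dist (G k) b = dist (G k) (G K) := by rw [hGK]
      _ ≤ dist a b / S * ∑ i ∈ Ioc k K, (w i)⁻¹ :=
        dist_le_mul_sum_Ioc_of_dist_pred_eq hstep hk le_rfl
      _ = (1 - (∑ i ∈ Ioc 0 k, (w i)⁻¹) / S) * dist a b := by
        rw [one_sub_div hS.ne', hsplit]
        ring

theorem dist_apply_zero_one_of_geodesic {X : Type*} [PseudoMetricSpace X] {γ : ℝ → X} {L : ℝ}
    (hγ : ∀ s ∈ Set.Icc (0:ℝ) 1, ∀ t ∈ Set.Icc (0:ℝ) 1, dist (γ s) (γ t) = |s - t| * L)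
    {t : ℝ} (ht : t ∈ Set.Icc (0:ℝ) 1) :
    dist (γ t) (γ 0) = t * L ∧ dist (γ t) (γ 1) = (1 - t) * L := by
  rw [hγ _ ht 0 ⟨le_rfl, zero_le_one⟩, hγ _ ht 1 ⟨zero_le_one, le_rfl⟩, sub_zero, abs_sub_comm,
    abs_of_nonneg ht.1, abs_of_nonneg (sub_nonneg.2 ht.2)]
  exact ⟨rfl, rfl⟩

theorem energy_minimizer_lies_on_geodesic_general
    {X : Type*} [MetricSpace X]
    (hgeo : ∀ x y : X, ∃ γ : ℝ → X, γ 0 = x ∧ γ 1 = y ∧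
      ∀ s ∈ Set.Icc (0:ℝ) 1, ∀ t ∈ Set.Icc (0:ℝ) 1,
        dist (γ s) (γ t) = |s - t| * dist x y)
    (h4 : ∀ x y v w : X, dist x v ^ 2 + dist y w ^ 2 ≤
      dist x w ^ 2 + dist y v ^ 2 + 2 * dist x y * dist v w)
    (K : ℕ) (hK : 1 ≤ K)
    (w : ℕ → ℝ) (hw : ∀ k ∈ Finset.Icc 1 K, 0 < w k)
    (a b : X) (G : ℕ → X) (hG0 : G 0 = a) (hGK : G K = b)
    (henergy : ∑ k ∈ Finset.Icc 1 K, w k * dist (G k) (G (k - 1)) ^ 2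
      = dist a b ^ 2 / ∑ i ∈ Finset.Icc 1 K, (w i)⁻¹) :
    ∃ γ : ℝ → X, γ 0 = a ∧ γ 1 = b ∧
      (∀ s ∈ Set.Icc (0:ℝ) 1, ∀ t ∈ Set.Icc (0:ℝ) 1,
        dist (γ s) (γ t) = |s - t| * dist a b) ∧
      ∀ k ≤ K, G k = γ (geodParam w K k) := by
  obtain ⟨γ, hγ0, hγ1, hγ⟩ := hgeo a b
  refine ⟨γ, hγ0, hγ1, hγ, fun k hk => ?_⟩
  obtain ⟨hGa, hGb⟩ := dist_le_geodParam_mul_of_energy_le hK hw hG0 hGK henergy.le hk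
  obtain ⟨hγa, hγb⟩ := dist_apply_zero_one_of_geodesic hγ (geodParam_mem_Icc hw hk)
  rw [hγ0] at hγa
  rw [hγ1] at hγb
  exact FourPointInequality.eq_of_dist_le h4 hGa hGb hγa.le hγb.le

/-- In a Hadamard space, any tuple `G₀,…,G_K` joining `a` to `b` whose
weighted discrete energy attains the minimal value `d(a,b)² / ∑ w_i⁻¹` lies on a
geodesic from `a` to `b`, sampled at the parameters `t_k`. -/
theorem energy_minimizer_lies_on_geodesic
    {X : Type*} [MetricSpace X] [CompleteSpace X]
    (hgeo : ∀ x y : X, ∃ γ : ℝ → X, γ 0 = x ∧ γ 1 = y ∧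
      ∀ s ∈ Set.Icc (0:ℝ) 1, ∀ t ∈ Set.Icc (0:ℝ) 1,
        dist (γ s) (γ t) = |s - t| * dist x y)
    (h4 : ∀ x y v w : X, dist x v ^ 2 + dist y w ^ 2 ≤
      dist x w ^ 2 + dist y v ^ 2 + 2 * dist x y * dist v w)
    (K : ℕ) (hK : 1 ≤ K)
    (w : ℕ → ℝ) (hw : ∀ k ∈ Finset.Icc 1 K, 0 < w k)
    (a b : X) (G : ℕ → X) (hG0 : G 0 = a) (hGK : G K = b)
    (henergy : ∑ k ∈ Finset.Icc 1 K, w k * dist (G k) (G (k - 1)) ^ 2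
      = dist a b ^ 2 / ∑ i ∈ Finset.Icc 1 K, (w i)⁻¹) :
    ∃ γ : ℝ → X, γ 0 = a ∧ γ 1 = b ∧
      (∀ s ∈ Set.Icc (0:ℝ) 1, ∀ t ∈ Set.Icc (0:ℝ) 1,
        dist (γ s) (γ t) = |s - t| * dist a b) ∧
      ∀ k ≤ K, G k = γ (geodParam w K k) :=
  energy_minimizer_lies_on_geodesic_general hgeo h4 K hK w hw a b G hG0 hGK henergy
end

section
/- Let E be a real inner product space, let K ≥ 2 be an integer and let w₁,…,w_K > 0. Suppose F₀,…,F_K ∈ E satisfy the Euler–Lagrange system w_k·(F_{k−1} − F_k) + w_{k+1}·(F_{k+1} − F_k) = 0 for all k = 1,…,K−1. Then F_k = F₀ + t_k·(F_K − F₀) for every k = 0,…,K, where t_k := (∑_{i=1}^k w_i⁻¹)/(∑_{i=1}^K w_i⁻¹). -/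
open Finset

/-- In a real inner product space, any solution of the Euler–Lagrange
system `w_k (F_{k-1} - F_k) + w_{k+1} (F_{k+1} - F k) = 0`, `k = 1,…,K−1`, lies on the
segment from `F₀` to `F_K`, sampled at the parameters `t_k`. -/
theorem euler_lagrange_points_on_segment
    {E : Type*} [NormedAddCommGroup E] [InnerProductSpace ℝ E]
    (K : ℕ) (hK : 2 ≤ K)
    (w : ℕ → ℝ) (hw : ∀ k ∈ Finset.Icc 1 K, 0 < w k)
    (F : ℕ → E)
    (hEL : ∀ k, 1 ≤ k → k < K →
      w k • (F (k - 1) - F k) + w (k + 1) • (F (k + 1) - F k) = 0) :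
    ∀ k ≤ K, F k = F 0 + geodParam w K k • (F K - F 0) := by
  set c : E := w 1 • (F 1 - F 0) with hc
  have hwpos : ∀ k, 1 ≤ k → k ≤ K → 0 < w k := fun k h1 h2 =>
    hw k (Finset.mem_Icc.mpr ⟨h1, h2⟩)
  have step : ∀ k, 1 ≤ k → k ≤ K → w k • (F k - F (k - 1)) = c := by
    intro k
    induction k with
    | zero => intro h; omega
    | succ n ih =>
      intro _ hle
      rcases Nat.eq_zero_or_pos n with hn | hn
      · subst hn; simp [hc]
      · have h1 : 1 ≤ n := hn
        have hlt : n < K := by omega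
        have hprev := ih h1 (le_of_lt hlt)
        have hel := hEL n h1 hlt
        have : w (n + 1) • (F (n + 1) - F n) = w n • (F n - F (n - 1)) := by
          linear_combination (norm := module) hel
        simpa [this] using hprev
  have sum_form : ∀ k, k ≤ K → F k = F 0 + (∑ i ∈ Finset.Icc 1 k, (w i)⁻¹) • c := by
    intro k
    induction k with
    | zero => intro _; simp
    | succ n ih =>
      intro hle
      have hF := step (n + 1) (by omega) hle
      have hwne : w (n + 1) ≠ 0 := ne_of_gt (hwpos (n + 1) (by omega) hle)
      have hstep : F (n + 1) = F n + (w (n + 1))⁻¹ • c := by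
        have : F (n + 1) - F n = (w (n + 1))⁻¹ • c := by
          rw [← hF]; simp [smul_smul, inv_mul_cancel₀ hwne]
        linear_combination (norm := module) this
      rw [hstep, ih (by omega), Finset.sum_Icc_succ_top (by omega : 1 ≤ n + 1),
        add_smul, add_assoc]
  have hSpos : 0 < ∑ i ∈ Finset.Icc 1 K, (w i)⁻¹ := by
    apply Finset.sum_pos
    · intro i hi
      exact inv_pos.mpr (hw i hi)
    · exact ⟨1, Finset.mem_Icc.mpr ⟨le_refl 1, by omega⟩⟩
  have hSne : (∑ i ∈ Finset.Icc 1 K, (w i)⁻¹) ≠ 0 := ne_of_gt hSpos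
  have hFK : F K - F 0 = (∑ i ∈ Finset.Icc 1 K, (w i)⁻¹) • c := by
    rw [sum_form K le_rfl]; abel
  intro k hk
  have : geodParam w K k • ((∑ i ∈ Finset.Icc 1 K, (w i)⁻¹) • c)
      = (∑ i ∈ Finset.Icc 1 k, (w i)⁻¹) • c := by
    rw [geodParam, smul_smul, div_mul_cancel₀ _ hSne]
  rw [sum_form k hk, hFK, this]
end

section
/- Let Ω ⊂ ℝⁿ be an open bounded set with the Lebesgue measure, let E be a real Hilbert space, let K ≥ 1 be an integer, and let 0 < ε ≤ M. Let w₁,…,w_K : Ω → ℝ be Lebesgue-measurable with ε ≤ w_k(x) ≤ M for all x ∈ Ω and k = 1,…,K. Let A, B ∈ L²(Ω,E) and define F̂₀ := A, F̂_K := B and F̂_k(x) := A(x) + t_k(x)·(B(x) − A(x)) for k = 1,…,K−1, where t_k(x) := (∑_{i=1}^k w_i(x)⁻¹)/(∑_{i=1}^K w_i(x)⁻¹). Then each F̂_k ∈ L²(Ω,E), and for all G₀,…,G_K ∈ L²(Ω,E) with G₀ = A and G_K = B one has ∑_{k=1}^K ∫_Ω w_k(x)·‖G_k(x) − G_{k−1}(x)‖²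 dx ≥ ∑_{k=1}^K ∫_Ω w_k(x)·‖F̂_k(x) − F̂_{k−1}(x)‖² dx, with equality if and only if G_k = F̂_k almost everywhere for all k = 1,…,K−1. -/
open MeasureTheory Finset
open scoped ENNReal

/-!
Pointwise in `x`, the increments of `F̂` are `w_k⁻¹ • v` with `v = (∑ w_i⁻¹)⁻¹ • (B - A)`.
Writing `G = F̂ + D` with `D 0 = D K = 0`, the cross term in `∑ w_k ‖ΔG_k‖²` is
`2 ⟪v, ∑ ΔD_k⟫ = 0` by telescoping, so the energy of `G` is the energy of `F̂` plus the energy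
of `D`. The energy of `F̂` is finite since the weights are bounded, and the energy of `D` vanishes
iff `D = 0` a.e., because the weights are positive and `D 0 = 0`.
-/

theorem Finset.sum_Icc_one_sub_pred {G : Type*} [AddCommGroup G] (d : ℕ → G) (K : ℕ) :
    ∑ k ∈ Icc 1 K, (d k - d (k - 1)) = d K - d 0 := by
  induction K with
  | zero => simp
  | succ K ih =>
    rw [sum_Icc_succ_top (Nat.le_add_left 1 K), ih, Nat.add_sub_cancel]
    abel

theorem abs_sum_Icc_div_sum_Icc_le_one {b : ℕ → ℝ} {k K : ℕ} (hb : ∀ i ∈ Icc 1 K, 0 ≤ b i)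
    (hk : k ≤ K) : |(∑ i ∈ Icc 1 k, b i) / ∑ i ∈ Icc 1 K, b i| ≤ 1 := by
  have hsub : Icc 1 k ⊆ Icc 1 K := Icc_subset_Icc_right hk
  rw [abs_div, abs_of_nonneg (sum_nonneg fun i hi => hb i (hsub hi)),
    abs_of_nonneg (sum_nonneg hb)]
  exact div_le_one_of_le₀ (sum_le_sum_of_subset_of_nonneg hsub fun i hi _ => hb i hi)
    (sum_nonneg hb)

section PathEnergy

variable {E : Type*} [NormedAddCommGroup E]

def pathEnergy (a : ℕ → ℝ) (K : ℕ) (f : ℕ → E) : ℝ :=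
  ∑ k ∈ Icc 1 K, a k * ‖f k - f (k - 1)‖ ^ 2

variable {a : ℕ → ℝ} {K : ℕ}

theorem pathEnergy_nonneg (ha : ∀ k ∈ Icc 1 K, 0 ≤ a k) (f : ℕ → E) :
    0 ≤ pathEnergy a K f :=
  sum_nonneg fun k hk => mul_nonneg (ha k hk) (sq_nonneg _)

theorem pathEnergy_eq_zero_iff {d : ℕ → E} (ha : ∀ k ∈ Icc 1 K, 0 < a k) (h0 : d 0 = 0) :
    pathEnergy a K d = 0 ↔ ∀ k ∈ Icc 1 K, d k = 0 := by
  have hterm : ∀ k ∈ Icc 1 K, a k * ‖d k - d (k - 1)‖ ^ 2 = 0 ↔ d k = d (k - 1) := by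
    intro k hk
    simp [(ha k hk).ne', sub_eq_zero]
  rw [pathEnergy, sum_eq_zero_iff_of_nonneg fun k hk => mul_nonneg (ha k hk).le (sq_nonneg _)]
  constructor
  · intro h k
    induction k with
    | zero => simp
    | succ k ih =>
      intro hk
      rw [(hterm _ hk).1 (h _ hk), Nat.add_sub_cancel]
      rcases Nat.eq_zero_or_pos k with rfl | hpos
      · exact h0
      · exact ih (mem_Icc.2 ⟨hpos, by grind⟩)
  · intro h k hk
    rw [hterm k hk, h k hk]
    rcases Nat.eq_zero_or_pos (k - 1) with h' | hpos
    · rw [h', h0]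
    · exact (h _ (mem_Icc.2 ⟨hpos, by grind⟩)).symm

variable [InnerProductSpace ℝ E]

theorem pathEnergy_eq_add_pathEnergy_sub {f g : ℕ → E} {v : E} (ha : ∀ k ∈ Icc 1 K, a k ≠ 0)
    (hf : ∀ k ∈ Icc 1 K, f k - f (k - 1) = (a k)⁻¹ • v) (h0 : g 0 = f 0) (hK : g K = f K) :
    pathEnergy a K g = pathEnergy a K f + pathEnergy a K (g - f) := by
  set d := g - f
  have hterm : ∀ k ∈ Icc 1 K, a k * ‖g k - g (k - 1)‖ ^ 2 =
      a k * ‖f k - f (k - 1)‖ ^ 2 + a k * ‖d k - d (k - 1)‖ ^ 2 +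
        2 * inner ℝ v (d k - d (k - 1)) := by
    intro k hk
    have hsplit : g k - g (k - 1) = (f k - f (k - 1)) + (d k - d (k - 1)) := by
      simp only [d, Pi.sub_apply]; abel
    rw [hsplit, norm_add_sq_real, hf k hk, real_inner_smul_left]
    linear_combination (2 * inner ℝ v (d k - d (k - 1))) * mul_inv_cancel₀ (ha k hk)
  have hcross : ∑ k ∈ Icc 1 K, 2 * inner ℝ v (d k - d (k - 1)) = 0 := by
    rw [← mul_sum, ← inner_sum, sum_Icc_one_sub_pred]
    simp [d, h0, hK]
  rw [pathEnergy, sum_congr rfl hterm, sum_add_distrib, sum_add_distrib, hcross, add_zero]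
  rfl

end PathEnergy

section WeightedInterpolation

variable {E : Type*} [AddCommGroup E] [Module ℝ E] {a : ℕ → ℝ} {K : ℕ}

noncomputable def weightedInterpolation (a : ℕ → ℝ) (K : ℕ) (A B : E) (k : ℕ) : E :=
  A + ((∑ i ∈ Icc 1 k, (a i)⁻¹) / ∑ i ∈ Icc 1 K, (a i)⁻¹) • (B - A)

theorem weightedInterpolation_zero (a : ℕ → ℝ) (K : ℕ) (A B : E) :
    weightedInterpolation a K A B 0 = A := by
  simp [weightedInterpolation]

theorem weightedInterpolation_self (h : ∑ i ∈ Icc 1 K, (a i)⁻¹ ≠ 0) (A B : E) :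
    weightedInterpolation a K A B K = B := by
  simp [weightedInterpolation, div_self h]

theorem weightedInterpolation_sub_pred (A B : E) {k : ℕ} (hk : 1 ≤ k) :
    weightedInterpolation a K A B k - weightedInterpolation a K A B (k - 1) =
      (a k)⁻¹ • ((∑ i ∈ Icc 1 K, (a i)⁻¹)⁻¹ • (B - A)) := by
  obtain ⟨m, rfl⟩ := Nat.exists_eq_add_of_le' hk
  rw [weightedInterpolation, weightedInterpolation, Nat.add_sub_cancel,
    sum_Icc_succ_top (Nat.le_add_left 1 m), smul_smul, add_sub_add_left_eq_sub, ← sub_smul]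
  congr 1
  ring

theorem eq_weightedInterpolation {f : ℕ → E} {A B : E} (hS : ∑ i ∈ Icc 1 K, (a i)⁻¹ ≠ 0)
    (h0 : f 0 = A) (hK : f K = B)
    (hf : ∀ k, 1 ≤ k → k ≤ K - 1 →
      f k = A + ((∑ i ∈ Icc 1 k, (a i)⁻¹) / ∑ i ∈ Icc 1 K, (a i)⁻¹) • (B - A))
    {k : ℕ} (hk : k ≤ K) : f k = weightedInterpolation a K A B k := by
  rcases Nat.eq_zero_or_pos k with rfl | hk0
  · rw [h0, weightedInterpolation_zero]
  rcases hk.eq_or_lt with rfl | hkK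
  · rw [hK, weightedInterpolation_self hS]
  · exact hf k hk0 (by omega)

end WeightedInterpolation

section LintegralPathEnergy

variable {α E : Type*} [MeasurableSpace α] {μ : Measure α} [NormedAddCommGroup E]
  {w : ℕ → α → ℝ} {K : ℕ}

theorem memLp_weightedInterpolation [NormedSpace ℝ E] {p : ℝ≥0∞} {A B : α → E}
    (hA : MemLp A p μ) (hB : MemLp B p μ) (hw : ∀ k, AEMeasurable (w k) μ)
    (hw_nonneg : ∀ᵐ x ∂μ, ∀ k ∈ Icc 1 K, 0 ≤ w k x) {k : ℕ} (hk : k ≤ K) :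
    MemLp (fun x => weightedInterpolation (w · x) K (A x) (B x) k) p μ := by
  have hsum (m : ℕ) : AEMeasurable (fun x => ∑ i ∈ Icc 1 m, (w i x)⁻¹) μ :=
    Finset.aemeasurable_fun_sum _ fun i _ => (hw i).inv
  have ht : MemLp (fun x => (∑ i ∈ Icc 1 k, (w i x)⁻¹) / ∑ i ∈ Icc 1 K, (w i x)⁻¹) ∞ μ :=
    memLp_top_of_bound ((hsum k).div (hsum K)).aestronglyMeasurable 1 <|
      hw_nonneg.mono fun x hx =>
        abs_sum_Icc_div_sum_Icc_le_one (fun i hi => inv_nonneg.2 (hx i hi)) hk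
  exact hA.add ((hB.sub hA).smul ht)

noncomputable def lintegralPathEnergy (μ : Measure α) (w : ℕ → α → ℝ) (K : ℕ)
    (H : ℕ → α → E) : ℝ≥0∞ :=
  ∫⁻ x, ENNReal.ofReal (pathEnergy (w · x) K (H · x)) ∂μ

theorem aemeasurable_mul_norm_sub_sq {v : α → ℝ} {f g : α → E} (hv : AEMeasurable v μ)
    (hf : AEStronglyMeasurable f μ) (hg : AEStronglyMeasurable g μ) :
    AEMeasurable (fun x => v x * ‖f x - g x‖ ^ 2) μ :=
  hv.mul ((hf.sub hg).norm.aemeasurable.pow_const 2)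

variable {H : ℕ → α → E}

theorem aemeasurable_pathEnergy (hw : ∀ k, AEMeasurable (w k) μ)
    (hH : ∀ k ≤ K, AEStronglyMeasurable (H k) μ) :
    AEMeasurable (fun x => pathEnergy (w · x) K (H · x)) μ :=
  Finset.aemeasurable_fun_sum _ fun k hk =>
    aemeasurable_mul_norm_sub_sq (hw k) (hH k (mem_Icc.1 hk).2) (hH (k - 1) (by grind))

theorem sum_lintegral_ofReal_eq_lintegralPathEnergy (hw : ∀ k, AEMeasurable (w k) μ)
    (hH : ∀ k ≤ K, AEStronglyMeasurable (H k) μ)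
    (hw_nonneg : ∀ᵐ x ∂μ, ∀ k ∈ Icc 1 K, 0 ≤ w k x) :
    ∑ k ∈ Icc 1 K, ∫⁻ x, ENNReal.ofReal (w k x * ‖H k x - H (k - 1) x‖ ^ 2) ∂μ =
      lintegralPathEnergy μ w K H := by
  rw [← lintegral_finsetSum' _ fun k hk =>
    (aemeasurable_mul_norm_sub_sq (hw k) (hH k (mem_Icc.1 hk).2)
      (hH (k - 1) (by grind))).ennreal_ofReal]
  refine lintegral_congr_ae (hw_nonneg.mono fun x hx => ?_)
  exact (ENNReal.ofReal_sum_of_nonneg fun k hk => mul_nonneg (hx k hk) (sq_nonneg _)).symm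

theorem lintegralPathEnergy_lt_top {C : ℝ} (hw : ∀ k, AEMeasurable (w k) μ)
    (hwC : ∀ᵐ x ∂μ, ∀ k ∈ Icc 1 K, ‖w k x‖ ≤ C) (hH : ∀ k ≤ K, MemLp (H k) 2 μ) :
    lintegralPathEnergy μ w K H < ∞ := by
  refine Integrable.lintegral_lt_top (integrable_finsetSum _ fun k hk => ?_)
  have hsub : MemLp (fun x => H k x - H (k - 1) x) 2 μ :=
    (hH k (mem_Icc.1 hk).2).sub (hH (k - 1) (by grind))
  exact ((memLp_two_iff_integrable_sq_norm hsub.1).1 hsub).bdd_mul (hw k).aestronglyMeasurable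
    (hwC.mono fun x hx => hx k hk)

theorem lintegralPathEnergy_eq_zero_iff {D : ℕ → α → E} (hw : ∀ k, AEMeasurable (w k) μ)
    (hw_pos : ∀ᵐ x ∂μ, ∀ k ∈ Icc 1 K, 0 < w k x) (hD : ∀ k ≤ K, AEStronglyMeasurable (D k) μ)
    (h0 : D 0 = 0) :
    lintegralPathEnergy μ w K D = 0 ↔ ∀ k ∈ Icc 1 K, D k =ᵐ[μ] 0 := by
  rw [lintegralPathEnergy, lintegral_eq_zero_iff' (aemeasurable_pathEnergy hw hD).ennreal_ofReal]
  simp only [Filter.EventuallyEq, Pi.zero_apply]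
  rw [← Filter.eventually_all_finset]
  refine Filter.eventually_congr (hw_pos.mono fun x hpos => ?_)
  rw [ENNReal.ofReal_eq_zero,
    (pathEnergy_nonneg (fun k hk => (hpos k hk).le) _).ge_iff_eq',
    pathEnergy_eq_zero_iff hpos (congrFun h0 x)]

variable [InnerProductSpace ℝ E] {F G : ℕ → α → E}

theorem lintegralPathEnergy_eq_add_lintegralPathEnergy_sub {v : α → E}
    (hw : ∀ k, AEMeasurable (w k) μ) (hw_pos : ∀ᵐ x ∂μ, ∀ k ∈ Icc 1 K, 0 < w k x)
    (hF : ∀ k ≤ K, AEStronglyMeasurable (F k) μ)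
    (hF_sub : ∀ᵐ x ∂μ, ∀ k ∈ Icc 1 K, F k x - F (k - 1) x = (w k x)⁻¹ • v x)
    (h0 : G 0 = F 0) (hK : G K = F K) :
    lintegralPathEnergy μ w K G =
      lintegralPathEnergy μ w K F + lintegralPathEnergy μ w K (G - F) := by
  rw [lintegralPathEnergy, lintegralPathEnergy, lintegralPathEnergy,
    ← lintegral_add_left' (aemeasurable_pathEnergy hw hF).ennreal_ofReal]
  refine lintegral_congr_ae ((hw_pos.and hF_sub).mono fun x ⟨hpos, hsub⟩ => ?_)
  have hnonneg : ∀ k ∈ Icc 1 K, 0 ≤ w k x := fun k hk => (hpos k hk).le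
  dsimp only
  rw [← ENNReal.ofReal_add (pathEnergy_nonneg hnonneg _) (pathEnergy_nonneg hnonneg _)]
  exact congrArg ENNReal.ofReal (pathEnergy_eq_add_pathEnergy_sub (fun k hk => (hpos k hk).ne')
    hsub (congrFun h0 x) (congrFun hK x))

theorem lintegralPathEnergy_le {v : α → E}
    (hw : ∀ k, AEMeasurable (w k) μ) (hw_pos : ∀ᵐ x ∂μ, ∀ k ∈ Icc 1 K, 0 < w k x)
    (hF : ∀ k ≤ K, AEStronglyMeasurable (F k) μ)
    (hF_sub : ∀ᵐ x ∂μ, ∀ k ∈ Icc 1 K, F k x - F (k - 1) x = (w k x)⁻¹ • v x)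
    (h0 : G 0 = F 0) (hK : G K = F K) :
    lintegralPathEnergy μ w K F ≤ lintegralPathEnergy μ w K G := by
  rw [lintegralPathEnergy_eq_add_lintegralPathEnergy_sub hw hw_pos hF hF_sub h0 hK]
  exact le_self_add

theorem lintegralPathEnergy_eq_iff {v : α → E}
    (hw : ∀ k, AEMeasurable (w k) μ) (hw_pos : ∀ᵐ x ∂μ, ∀ k ∈ Icc 1 K, 0 < w k x)
    (hF : ∀ k ≤ K, AEStronglyMeasurable (F k) μ) (hG : ∀ k ≤ K, AEStronglyMeasurable (G k) μ)
    (hF_sub : ∀ᵐ x ∂μ, ∀ k ∈ Icc 1 K, F k x - F (k - 1) x = (w k x)⁻¹ • v x)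
    (h0 : G 0 = F 0) (hK : G K = F K) (hF_fin : lintegralPathEnergy μ w K F ≠ ∞) :
    lintegralPathEnergy μ w K G = lintegralPathEnergy μ w K F ↔
      ∀ k ∈ Icc 1 K, G k =ᵐ[μ] F k := by
  have hD0 : (G - F) 0 = 0 := sub_eq_zero.2 h0
  have hcancel (b : ℝ≥0∞) :
      lintegralPathEnergy μ w K F + b = lintegralPathEnergy μ w K F ↔ b = 0 := by
    conv_rhs => rw [← ENNReal.add_right_inj hF_fin, add_zero]
  rw [lintegralPathEnergy_eq_add_lintegralPathEnergy_sub hw hw_pos hF hF_sub h0 hK, hcancel,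
    lintegralPathEnergy_eq_zero_iff (D := G - F) hw hw_pos
      (fun k hk => (hG k hk).sub (hF k hk)) hD0]
  exact forall₂_congr fun k _ => Filter.eventuallyEq_iff_sub.symm

theorem weightedInterpolation_isUniqueMinimizer {A B : α → E} {M : ℝ}
    (hA : MemLp A 2 μ) (hB : MemLp B 2 μ) (hw : ∀ k, AEMeasurable (w k) μ)
    (hw_pos : ∀ᵐ x ∂μ, ∀ k ∈ Icc 1 K, 0 < w k x) (hw_le : ∀ᵐ x ∂μ, ∀ k ∈ Icc 1 K, ‖w k x‖ ≤ M)
    (hF : ∀ᵐ x ∂μ, ∀ k ≤ K, F k x = weightedInterpolation (w · x) K (A x) (B x) k) :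
    (∀ k ≤ K, MemLp (F k) 2 μ) ∧
      ∀ G : ℕ → α → E, (∀ k ≤ K, MemLp (G k) 2 μ) → G 0 = F 0 → G K = F K →
        lintegralPathEnergy μ w K F ≤ lintegralPathEnergy μ w K G ∧
        (lintegralPathEnergy μ w K G = lintegralPathEnergy μ w K F ↔
          ∀ k ∈ Icc 1 K, G k =ᵐ[μ] F k) := by
  have hF_mem : ∀ k ≤ K, MemLp (F k) 2 μ := fun k hk =>
    (memLp_weightedInterpolation hA hB hw (hw_pos.mono fun x hx i hi => (hx i hi).le) hk).ae_eq
      (hF.mono fun x hx => (hx k hk).symm)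
  have hF_sub : ∀ᵐ x ∂μ, ∀ k ∈ Icc 1 K,
      F k x - F (k - 1) x = (w k x)⁻¹ • ((∑ i ∈ Icc 1 K, (w i x)⁻¹)⁻¹ • (B x - A x)) :=
    hF.mono fun x hx k hk => by
      rw [hx k (mem_Icc.1 hk).2, hx (k - 1) (by grind),
        weightedInterpolation_sub_pred _ _ (mem_Icc.1 hk).1]
  have hF_meas k (hk : k ≤ K) := (hF_mem k hk).1
  refine ⟨hF_mem, fun G hG h0 hK => ⟨lintegralPathEnergy_le hw hw_pos hF_meas hF_sub h0 hK,
    lintegralPathEnergy_eq_iff hw hw_pos hF_meas (fun k hk => (hG k hk).1) hF_sub h0 hK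
      (lintegralPathEnergy_lt_top hw hw_le hF_mem).ne⟩⟩

end LintegralPathEnergy

theorem weighted_energy_unique_minimizer_L2_general
    {n : ℕ}
    (Ω : Set (EuclideanSpace ℝ (Fin n))) (hΩo : IsOpen Ω)
    {E : Type*} [NormedAddCommGroup E] [InnerProductSpace ℝ E]
    (K : ℕ) (hK : 1 ≤ K) (ε M : ℝ) (hε : 0 < ε)
    (w : ℕ → EuclideanSpace ℝ (Fin n) → ℝ)
    (hwmeas : ∀ k, Measurable (w k))
    (hw : ∀ k ∈ Finset.Icc 1 K, ∀ x ∈ Ω, ε ≤ w k x ∧ w k x ≤ M)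
    (A B : EuclideanSpace ℝ (Fin n) → E)
    (hA : MemLp A 2 (volume.restrict Ω)) (hB : MemLp B 2 (volume.restrict Ω))
    (t : ℕ → EuclideanSpace ℝ (Fin n) → ℝ)
    (ht : ∀ k x, t k x = (∑ i ∈ Finset.Icc 1 k, (w i x)⁻¹)
      / (∑ i ∈ Finset.Icc 1 K, (w i x)⁻¹))
    (F : ℕ → EuclideanSpace ℝ (Fin n) → E)
    (hF0 : F 0 = A) (hFK : F K = B)
    (hF : ∀ k, 1 ≤ k → k ≤ K - 1 → ∀ x, F k x = A x + t k x • (B x - A x)) :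
    (∀ k ≤ K, MemLp (F k) 2 (volume.restrict Ω)) ∧
    ∀ G : ℕ → EuclideanSpace ℝ (Fin n) → E,
      (∀ k ≤ K, MemLp (G k) 2 (volume.restrict Ω)) → G 0 = A → G K = B →
      (∑ k ∈ Finset.Icc 1 K,
          ∫⁻ x in Ω, ENNReal.ofReal (w k x * ‖F k x - F (k - 1) x‖ ^ 2)) ≤
        (∑ k ∈ Finset.Icc 1 K,
          ∫⁻ x in Ω, ENNReal.ofReal (w k x * ‖G k x - G (k - 1) x‖ ^ 2)) ∧
      ((∑ k ∈ Finset.Icc 1 K,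
          ∫⁻ x in Ω, ENNReal.ofReal (w k x * ‖G k x - G (k - 1) x‖ ^ 2))
          = (∑ k ∈ Finset.Icc 1 K,
          ∫⁻ x in Ω, ENNReal.ofReal (w k x * ‖F k x - F (k - 1) x‖ ^ 2)) ↔
        ∀ k, 1 ≤ k → k ≤ K - 1 → G k =ᵐ[volume.restrict Ω] F k) := by
  set μ := volume.restrict Ω
  have hΩ : MeasurableSet Ω := hΩo.measurableSet
  have hw_meas : ∀ k, AEMeasurable (w k) μ := fun k => (hwmeas k).aemeasurable
  have hw_pos : ∀ᵐ x ∂μ, ∀ k ∈ Icc 1 K, 0 < w k x :=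
    ae_restrict_of_forall_mem hΩ fun x hx k hk => hε.trans_le (hw k hk x hx).1
  have hw_le : ∀ᵐ x ∂μ, ∀ k ∈ Icc 1 K, ‖w k x‖ ≤ M :=
    ae_restrict_of_forall_mem hΩ fun x hx k hk =>
      (Real.norm_of_nonneg (hε.le.trans (hw k hk x hx).1)).trans_le (hw k hk x hx).2
  have hF_interp : ∀ᵐ x ∂μ, ∀ k ≤ K, F k x = weightedInterpolation (w · x) K (A x) (B x) k :=
    hw_pos.mono fun x hx k hk => eq_weightedInterpolation (f := (F · x))
      (sum_pos (fun i hi => inv_pos.2 (hx i hi)) (nonempty_Icc.2 hK)).ne' (congrFun hF0 x)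
      (congrFun hFK x) (fun k hk1 hk2 => by rw [hF k hk1 hk2 x, ht]) hk
  obtain ⟨hF_mem, hF_min⟩ :=
    weightedInterpolation_isUniqueMinimizer hA hB hw_meas hw_pos hw_le hF_interp
  refine ⟨hF_mem, fun G hG_mem hG0 hGK => ?_⟩
  have hw_nonneg := hw_pos.mono fun x hx k hk => (hx k hk).le
  rw [sum_lintegral_ofReal_eq_lintegralPathEnergy hw_meas (fun k hk => (hF_mem k hk).1) hw_nonneg,
    sum_lintegral_ofReal_eq_lintegralPathEnergy hw_meas (fun k hk => (hG_mem k hk).1) hw_nonneg]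
  have hGK_eq : G K = F K := hGK.trans hFK.symm
  refine (hF_min G hG_mem (hG0.trans hF0.symm) hGK_eq).imp_right fun h => h.trans
    ⟨fun h k hk1 hk2 => h k (mem_Icc.2 ⟨hk1, by omega⟩), fun h k hk => ?_⟩
  rcases (mem_Icc.1 hk).2.eq_or_lt with rfl | hkK
  · rw [hGK_eq]
  · exact h k (mem_Icc.1 hk).1 (by omega)

/-- For measurable weights `ε ≤ w_k ≤ M` and `A, B ∈ L²(Ω, E)`, the
pointwise linear interpolations `F̂_k(x) = A(x) + t_k(x)(B(x) − A(x))` belong to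
`L²(Ω, E)` and uniquely (up to null sets) minimize the weighted discrete path energy
among all `L²` tuples joining `A` to `B`. -/
theorem weighted_energy_unique_minimizer_L2
    {n : ℕ} (hn : 1 ≤ n)
    (Ω : Set (EuclideanSpace ℝ (Fin n))) (hΩo : IsOpen Ω) (hΩb : Bornology.IsBounded Ω)
    {E : Type*} [NormedAddCommGroup E] [InnerProductSpace ℝ E] [CompleteSpace E]
    (K : ℕ) (hK : 1 ≤ K) (ε M : ℝ) (hε : 0 < ε) (hεM : ε ≤ M)
    (w : ℕ → EuclideanSpace ℝ (Fin n) → ℝ)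
    (hwmeas : ∀ k, Measurable (w k))
    (hw : ∀ k ∈ Finset.Icc 1 K, ∀ x ∈ Ω, ε ≤ w k x ∧ w k x ≤ M)
    (A B : EuclideanSpace ℝ (Fin n) → E)
    (hA : MemLp A 2 (volume.restrict Ω)) (hB : MemLp B 2 (volume.restrict Ω))
    (t : ℕ → EuclideanSpace ℝ (Fin n) → ℝ)
    (ht : ∀ k x, t k x = (∑ i ∈ Finset.Icc 1 k, (w i x)⁻¹)
      / (∑ i ∈ Finset.Icc 1 K, (w i x)⁻¹))
    (F : ℕ → EuclideanSpace ℝ (Fin n) → E)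
    (hF0 : F 0 = A) (hFK : F K = B)
    (hF : ∀ k, 1 ≤ k → k ≤ K - 1 → ∀ x, F k x = A x + t k x • (B x - A x)) :
    (∀ k ≤ K, MemLp (F k) 2 (volume.restrict Ω)) ∧
    ∀ G : ℕ → EuclideanSpace ℝ (Fin n) → E,
      (∀ k ≤ K, MemLp (G k) 2 (volume.restrict Ω)) → G 0 = A → G K = B →
      (∑ k ∈ Finset.Icc 1 K,
          ∫⁻ x in Ω, ENNReal.ofReal (w k x * ‖F k x - F (k - 1) x‖ ^ 2)) ≤
        (∑ k ∈ Finset.Icc 1 K,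
          ∫⁻ x in Ω, ENNReal.ofReal (w k x * ‖G k x - G (k - 1) x‖ ^ 2)) ∧
      ((∑ k ∈ Finset.Icc 1 K,
          ∫⁻ x in Ω, ENNReal.ofReal (w k x * ‖G k x - G (k - 1) x‖ ^ 2))
          = (∑ k ∈ Finset.Icc 1 K,
          ∫⁻ x in Ω, ENNReal.ofReal (w k x * ‖F k x - F (k - 1) x‖ ^ 2)) ↔
        ∀ k, 1 ≤ k → k ≤ K - 1 → G k =ᵐ[volume.restrict Ω] F k) :=
  weighted_energy_unique_minimizer_L2_general Ω hΩo K hK ε M hε w hwmeas hw A B hA hB t ht F hF0 hFK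
    hF
end
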